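/- arXiv:2308.14193 — 4 statements merged into one kernel-verified Lean document; each statement's English description precedes it below -/
import Mathlib

section
/- Let X be a Hilbert space and T : X ⇉ X be locally maximal monotone of type (B) around (x̄, x̄*) ∈ gph T. Then for every λ > 0, the resolvent (I + λT)⁻¹ has a continuous single-valued localization around (x̄ + λx̄*, x̄). -/
open Set Filter Topology RealInnerProductSpace

variable {X : Type*} [NormedAddCommGroup X] [InnerProductSpace ℝ X] [CompleteSpace X]

/-- Graph of a set-valued map. -/
def gph (T : X → Set X) : Set (X × X) := {p | p.2 ∈ T p.1}

/-- Monotone set-valued operator on a Hilbert space. -/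
def Mono (T : X → Set X) : Prop :=
  ∀ p ∈ gph T, ∀ q ∈ gph T, 0 ≤ ⟪p.2 - q.2, p.1 - q.1⟫

/-- Maximal monotone operator. -/
def MaxMono (T : X → Set X) : Prop :=
  Mono T ∧ ∀ S : X → Set X, Mono S → gph T ⊆ gph S → gph S = gph T

/-- σ-strongly monotone operator. -/
def StrMono (σ : ℝ) (T : X → Set X) : Prop :=
  ∀ p ∈ gph T, ∀ q ∈ gph T, σ * ‖p.1 - q.1‖ ^ 2 ≤ ⟪p.2 - q.2, p.1 - q.1⟫

/-- σ-strongly maximal monotone operator. -/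
def StrMaxMono (σ : ℝ) (T : X → Set X) : Prop :=
  StrMono σ T ∧ ∀ S : X → Set X, StrMono σ S → gph T ⊆ gph S → gph S = gph T

/-- Monotone with respect to a set `W ⊆ X × X`. -/
def MonoOn' (T : X → Set X) (W : Set (X × X)) : Prop :=
  ∀ p ∈ gph T ∩ W, ∀ q ∈ gph T ∩ W, 0 ≤ ⟪p.2 - q.2, p.1 - q.1⟫

/-- σ-strongly monotone with respect to a set `W ⊆ X × X`. -/
def StrMonoOn' (σ : ℝ) (T : X → Set X) (W : Set (X × X)) : Prop :=
  ∀ p ∈ gph T ∩ W, ∀ q ∈ gph T ∩ W, σ * ‖p.1 - q.1‖ ^ 2 ≤ ⟪p.2 - q.2, p.1 - q.1⟫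

/-- Locally maximal monotone of type (A) with respect to `W`. -/
def LocMaxA (T : X → Set X) (W : Set (X × X)) : Prop :=
  MonoOn' T W ∧ ∀ S : X → Set X, MonoOn' S W → gph T ∩ W ⊆ gph S ∩ W →
    gph S ∩ W = gph T ∩ W

/-- Locally maximal monotone of type (A) around a graph point. -/
def LocMaxAAt (T : X → Set X) (x v : X) : Prop :=
  ∃ U ∈ 𝓝 x, ∃ V ∈ 𝓝 v, LocMaxA T (U ×ˢ V)

/-- Locally maximal monotone of type (B) around a graph point. -/
def LocMaxBAt (T : X → Set X) (x v : X) : Prop :=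
  ∃ U ∈ 𝓝 x, ∃ V ∈ 𝓝 v, ∃ G : X → Set X, MaxMono G ∧
    gph G ∩ U ×ˢ V = gph T ∩ U ×ˢ V

/-- Locally monotone around a graph point. -/
def LocMonoAt (T : X → Set X) (x v : X) : Prop :=
  ∃ U ∈ 𝓝 x, ∃ V ∈ 𝓝 v, ∃ G : X → Set X, Mono G ∧
    gph G ∩ U ×ˢ V = gph T ∩ U ×ˢ V

/-- Locally strongly maximal monotone of type (A) around a graph point with modulus σ. -/
def LocStrMaxAAt (σ : ℝ) (T : X → Set X) (x v : X) : Prop :=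
  ∃ U ∈ 𝓝 x, ∃ V ∈ 𝓝 v, StrMonoOn' σ T (U ×ˢ V) ∧
    ∀ S : X → Set X, MonoOn' S (U ×ˢ V) → gph T ∩ U ×ˢ V ⊆ gph S ∩ U ×ˢ V →
      gph S ∩ U ×ˢ V = gph T ∩ U ×ˢ V

/-- Locally strongly maximal monotone of type (B) around a graph point with modulus σ. -/
def LocStrMaxBAt (σ : ℝ) (T : X → Set X) (x v : X) : Prop :=
  ∃ U ∈ 𝓝 x, ∃ V ∈ 𝓝 v, ∃ G : X → Set X, StrMaxMono σ G ∧
    gph G ∩ U ×ˢ V = gph T ∩ U ×ˢ V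

/-- Pointwise sum of set-valued maps. -/
def addMap (T S : X → Set X) : X → Set X :=
  fun x => {v | ∃ a ∈ T x, ∃ b ∈ S x, v = a + b}

/-- The shift `T + σ I`. -/
def shiftI (σ : ℝ) (T : X → Set X) : X → Set X :=
  fun x => (fun v => v + σ • x) '' T x

/-- Set-valued inverse. -/
def invMap (T : X → Set X) : X → Set X := fun v => {x | v ∈ T x}

/-- Resolvent `(I + λ T)⁻¹` as a set-valued map. -/
def res (lam : ℝ) (T : X → Set X) : X → Set X :=
  fun y => {x | ∃ v ∈ T x, y = x + lam • v}

/-- `F` has a single-valued localization around `(ȳ, x̄) ∈ gph F`. -/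
def HasSVLoc (F : X → Set X) (ybar xbar : X) : Prop :=
  ∃ W ∈ 𝓝 ybar, ∃ Q ∈ 𝓝 xbar, ∃ f : X → X, (∀ y ∈ W, f y ∈ Q) ∧
    ∀ y x, (x ∈ F y ∧ y ∈ W ∧ x ∈ Q) ↔ (y ∈ W ∧ x = f y)

/-- `F` has a continuous single-valued localization around `(ȳ, x̄) ∈ gph F`. -/
def HasCSVLoc (F : X → Set X) (ybar xbar : X) : Prop :=
  ∃ W ∈ 𝓝 ybar, ∃ Q ∈ 𝓝 xbar, ∃ f : X → X, ContinuousOn f W ∧ (∀ y ∈ W, f y ∈ Q) ∧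
    ∀ y x, (x ∈ F y ∧ y ∈ W ∧ x ∈ Q) ↔ (y ∈ W ∧ x = f y)

/-- Hypomonotone with modulus `r` with respect to `W`. -/
def HypoOn (r : ℝ) (T : X → Set X) (W : Set (X × X)) : Prop :=
  ∀ p ∈ gph T ∩ W, ∀ q ∈ gph T ∩ W,
    -(r * ‖p.1 - q.1‖ ^ 2) ≤ ⟪p.2 - q.2, p.1 - q.1⟫

/-- Locally hypomonotone with modulus `r` around a graph point. -/
def LocHypoAt (r : ℝ) (T : X → Set X) (x v : X) : Prop :=
  ∃ W ∈ 𝓝 ((x, v) : X × X), HypoOn r T W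

/-- The regular (Fréchet) normal cone to `Ω ⊆ X × X` at `p`, using the sum norm. -/
def rnc (Ω : Set (X × X)) (p : X × X) : Set (X × X) :=
  {q | ∀ ε > 0, ∀ᶠ u in 𝓝[Ω] p,
    ⟪q.1, u.1 - p.1⟫ + ⟪q.2, u.2 - p.2⟫ ≤ ε * (‖u.1 - p.1‖ + ‖u.2 - p.2‖)}

/-- The regular coderivative of `F` at `(x, v) ∈ gph F` applied to `w`. -/
def coderiv (F : X → Set X) (x v w : X) : Set X :=
  {z | ((z, -w) : X × X) ∈ rnc (gph F) (x, v)}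

/-- The graph of `T` is locally closed around `p`. -/
def LocClosedAt (Ω : Set (X × X)) (p : X × X) : Prop :=
  ∃ ε > 0, IsClosed (Ω ∩ Metric.closedBall p ε)

lemma maxMono_mem {G : X → Set X} (hG : MaxMono G) {x v : X}
    (h : ∀ a b, b ∈ G a → 0 ≤ ⟪v - b, x - a⟫) : v ∈ G x := by
  classical
  set S : X → Set X := fun z => G z ∪ {w | z = x ∧ w = v} with hSdef
  have hsub : gph G ⊆ gph S := fun p hp => Or.inl hp
  have hmono : Mono S := by
    rintro ⟨p1, p2⟩ hp ⟨q1, q2⟩ hq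
    dsimp only at hp hq ⊢
    rcases hp with hp | ⟨he1, he2⟩ <;> rcases hq with hq | ⟨hf1, hf2⟩ <;>
      dsimp only at *
    · exact hG.1 (p1, p2) hp (q1, q2) hq
    · rw [hf1, hf2]
      have := h p1 p2 hp
      rw [← neg_sub p2 v, ← neg_sub p1 x] at this
      rwa [inner_neg_neg] at this
    · rw [he1, he2]; exact h q1 q2 hq
    · rw [he1, he2, hf1, hf2]; simp [sub_self]
  have hSG := hG.2 S hmono hsub
  have : (x, v) ∈ gph S := Or.inr ⟨rfl, rfl⟩
  rw [hSG] at this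
  exact this

lemma exists_rel {G : X → Set X} (hG : MaxMono G) (x v : X) :
    ∃ a b, b ∈ G a ∧ ⟪v - b, x - a⟫ ≤ 0 := by
  by_contra hcon
  push_neg at hcon
  have hv : v ∈ G x := maxMono_mem hG (fun a b hb => (hcon a b hb).le)
  have := hcon x v hv
  simp at this

noncomputable def cfun (a b x v : X) : ℝ :=
  ⟪v, a⟫ + ⟪x, b⟫ - ⟪a, b⟫ + ‖x‖^2/2 + ‖v‖^2/2

lemma qline (u d : X) (t : ℝ) : ‖u + t • d‖^2 = ‖u‖^2 + 2*t*⟪u,d⟫ + t^2*‖d‖^2 := by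
  rw [norm_add_sq_real, real_inner_smul_right, norm_smul]
  simp [mul_pow, sq_abs]; ring

lemma cfun_line (a b x v p q : X) (t : ℝ) :
    cfun a b (x + t • (p - x)) (v + t • (q - v)) =
      (1 - t) * cfun a b x v + t * cfun a b p q
        - t * (1 - t) * (‖p - x‖^2/2 + ‖q - v‖^2/2) := by
  unfold cfun
  rw [qline, qline]
  simp only [inner_add_left, inner_add_right, inner_sub_left, inner_sub_right,
    real_inner_smul_left, real_inner_smul_right, norm_sub_sq_real,
    real_inner_self_eq_norm_sq, real_inner_comm]
  ring

lemma cfun_le_of_mem {G : X → Set X} (hmono : Mono G) {a b p q : X}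
    (hab : b ∈ G a) (hpq : q ∈ G p) :
    cfun a b p q ≤ ⟪p, q⟫ + ‖p‖^2/2 + ‖q‖^2/2 := by
  have h := hmono (p, q) hpq (a, b) hab
  have e : ⟪p,q⟫ - (⟪q,a⟫+⟪p,b⟫-⟪a,b⟫) = ⟪q-b, p-a⟫ := by
    simp only [inner_sub_left, inner_sub_right, real_inner_comm]; ring
  unfold cfun; simp only at h; linarith [e ▸ h]

lemma exists_cfun_ge {G : X → Set X} (hG : MaxMono G) (x v : X) :
    ∃ a b, b ∈ G a ∧ ‖x + v‖^2/2 ≤ cfun a b x v := by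
  obtain ⟨a, b, hb, hle⟩ := exists_rel hG x v
  refine ⟨a, b, hb, ?_⟩
  have e : cfun a b x v - ‖x + v‖^2/2 = -⟪v - b, x - a⟫ := by
    unfold cfun
    simp only [inner_sub_left, inner_sub_right, norm_add_sq_real, real_inner_comm]
    ring
  linarith

set_option maxHeartbeats 1000000 in
lemma minty_zero {G : X → Set X} (hG : MaxMono G) : ∃ x, -x ∈ G x := by
  obtain ⟨a₀, b₀, hab₀, -⟩ := exists_rel hG 0 0
  set A : Set ℝ := {r | 0 ≤ r ∧ ∃ x v, ∀ a b, b ∈ G a → cfun a b x v ≤ r} with hAdef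
  have hbdd : BddBelow A := ⟨0, fun r hr => hr.1⟩
  have hAne : A.Nonempty := by
    refine ⟨max 0 (⟪a₀, b₀⟫ + ‖a₀‖^2/2 + ‖b₀‖^2/2), le_max_left _ _, a₀, b₀, ?_⟩
    exact fun a b hb => (cfun_le_of_mem hG.1 hb hab₀).trans (le_max_right _ _)
  set α := sInf A with hαdef
  have hmemA : ∀ r x v, (∀ a b, b ∈ G a → cfun a b x v ≤ r) →
      α ≤ r ∧ ‖x + v‖^2/2 ≤ r := by
    intro r x v h
    obtain ⟨a, b, hb, hge⟩ := exists_cfun_ge hG x v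
    have h2 : ‖x + v‖^2/2 ≤ r := hge.trans (h a b hb)
    have hr : r ∈ A := ⟨le_trans (by positivity) h2, x, v, h⟩
    exact ⟨csInf_le hbdd hr, h2⟩
  have hseq : ∀ n : ℕ, ∃ x v, ∀ a b, b ∈ G a → cfun a b x v ≤ α + 1/(n+1) := by
    intro n
    have hpos : (0:ℝ) < 1/(n+1) := by positivity
    obtain ⟨r, hrA, hrlt⟩ := Real.lt_sInf_add_pos hAne hpos
    obtain ⟨-, x, v, h⟩ := hrA
    exact ⟨x, v, fun a b hb => (h a b hb).trans hrlt.le⟩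
  choose xs vs hxs using hseq
  -- Cauchy estimate
  have hD : ∀ m n : ℕ, ‖xs n - xs m‖^2 + ‖vs n - vs m‖^2 ≤ 4 * (1/(m+1) + 1/(n+1)) := by
    intro m n
    have hub : ∀ a b, b ∈ G a →
        cfun a b (xs m + (1/2 : ℝ) • (xs n - xs m)) (vs m + (1/2 : ℝ) • (vs n - vs m)) ≤
          (α + 1/(m+1))/2 + (α + 1/(n+1))/2
            - (1/4) * (‖xs n - xs m‖^2/2 + ‖vs n - vs m‖^2/2) := by
      intro a b hb
      rw [cfun_line]
      have h1 := hxs m a b hb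
      have h2 := hxs n a b hb
      nlinarith [h1, h2]
    have := (hmemA _ _ _ hub).1
    linarith
  have hcauchy : ∀ (us : ℕ → X),
      (∀ m n : ℕ, ‖us n - us m‖^2 ≤ 4 * (1/(m+1) + 1/(n+1))) → CauchySeq us := by
    intro us hus
    rw [Metric.cauchySeq_iff']
    intro ε hε
    obtain ⟨N, hN⟩ := exists_nat_gt (8 / ε^2)
    refine ⟨N, fun n hn => ?_⟩
    have hNpos : (0:ℝ) < N + 1 := by positivity
    have h8 : 8 / ε^2 < N + 1 := hN.trans (by linarith)
    have h1 : 4 * (1/((N:ℝ)+1) + 1/((n:ℝ)+1)) ≤ 8 / ((N:ℝ)+1) := by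
      have : (1:ℝ)/((n:ℝ)+1) ≤ 1/((N:ℝ)+1) := by
        apply one_div_le_one_div_of_le hNpos
        have : (N:ℝ) ≤ n := Nat.cast_le.2 hn
        linarith
      have he : 8/((N:ℝ)+1) = 4*(1/((N:ℝ)+1) + 1/((N:ℝ)+1)) := by ring
      linarith
    have h2 : 8 / ((N:ℝ)+1) < ε^2 := by
      rw [div_lt_iff₀ hNpos]
      rw [div_lt_iff₀ (by positivity : (0:ℝ) < ε^2)] at h8
      linarith [h8]
    have hlt := ((hus N n).trans h1).trans_lt h2
    rw [dist_eq_norm]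
    nlinarith [hlt, norm_nonneg (us n - us N), hε]
  have hcx : CauchySeq xs := hcauchy xs (fun m n => by nlinarith [hD m n, sq_nonneg ‖vs n - vs m‖])
  have hcv : CauchySeq vs := hcauchy vs (fun m n => by nlinarith [hD m n, sq_nonneg ‖xs n - xs m‖])
  obtain ⟨x₀, hx₀⟩ := cauchySeq_tendsto_of_complete hcx
  obtain ⟨v₀, hv₀⟩ := cauchySeq_tendsto_of_complete hcv
  -- the limit is a minimizer
  have hUb₀ : ∀ a b, b ∈ G a → cfun a b x₀ v₀ ≤ α := by
    intro a b hb
    have hcont : Continuous fun p : X × X => cfun a b p.1 p.2 := by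
      unfold cfun
      have c1 : Continuous fun p : X × X => ⟪p.2, a⟫ :=
        continuous_snd.inner continuous_const
      have c2 : Continuous fun p : X × X => ⟪p.1, b⟫ :=
        continuous_fst.inner continuous_const
      have c3 : Continuous fun p : X × X => ‖p.1‖^2/2 :=
        (continuous_fst.norm.pow 2).div_const 2
      have c4 : Continuous fun p : X × X => ‖p.2‖^2/2 :=
        (continuous_snd.norm.pow 2).div_const 2
      exact (((c1.add c2).sub continuous_const).add c3).add c4
    have h1 : Tendsto (fun n => cfun a b (xs n) (vs n)) atTop (𝓝 (cfun a b x₀ v₀)) :=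
      (hcont.tendsto _).comp (hx₀.prodMk_nhds hv₀)
    have h2 : Tendsto (fun n : ℕ => α + 1/(n+1)) atTop (𝓝 α) := by
      simpa using tendsto_const_nhds.add (tendsto_one_div_add_atTop_nhds_zero_nat (𝕜 := ℝ))
    exact le_of_tendsto_of_tendsto' h1 h2 (fun n => hxs n a b hb)
  obtain ⟨hααα, hα₀⟩ := hmemA α x₀ v₀ hUb₀
  -- variational inequality
  have hvar : ∀ a b, b ∈ G a →
      α + (‖a - x₀‖^2/2 + ‖b - v₀‖^2/2) ≤ ⟪a, b⟫ + ‖a‖^2/2 + ‖b‖^2/2 := by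
    intro a b hb
    set K := ‖a - x₀‖^2/2 + ‖b - v₀‖^2/2 with hK
    set β := ⟪a, b⟫ + ‖a‖^2/2 + ‖b‖^2/2 with hβ
    have hK0 : 0 ≤ K := by positivity
    have key : ∀ t : ℝ, 0 < t → t ≤ 1 → α + K ≤ β + t * K := by
      intro t ht0 ht1
      have hub : ∀ a' b', b' ∈ G a' →
          cfun a' b' (x₀ + t • (a - x₀)) (v₀ + t • (b - v₀)) ≤
            (1 - t) * α + t * β - t * (1 - t) * K := by
        intro a' b' hb'
        rw [cfun_line, hK]
        have h1 := hUb₀ a' b' hb'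
        have h2 := cfun_le_of_mem hG.1 hb' hb
        have h1' : (1-t) * cfun a' b' x₀ v₀ ≤ (1-t) * α :=
          mul_le_mul_of_nonneg_left h1 (by linarith)
        have h2' : t * cfun a' b' a b ≤ t * β :=
          mul_le_mul_of_nonneg_left (by rw [hβ]; exact h2) ht0.le
        nlinarith [h1', h2']
      have hle := (hmemA _ _ _ hub).1
      nlinarith [hle]
    have hlim : Tendsto (fun n : ℕ => β + (1/(n+1)) * K) atTop (𝓝 β) := by
      have := (tendsto_one_div_add_atTop_nhds_zero_nat (𝕜 := ℝ)).mul_const K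
      simpa using tendsto_const_nhds.add this
    refine ge_of_tendsto hlim (Eventually.of_forall fun n => ?_)
    exact key (1/(n+1)) (by positivity) (by
      rw [div_le_one (by positivity)]; linarith [Nat.cast_nonneg (α := ℝ) n])
  -- monotone relatedness of (-v₀, -x₀)
  have hrel : ∀ a b, b ∈ G a → 0 ≤ ⟪-x₀ - b, -v₀ - a⟫ := by
    intro a b hb
    have h1 := hvar a b hb
    have e1 : ‖a - x₀‖^2 = ‖a‖^2 - 2*⟪a, x₀⟫ + ‖x₀‖^2 := norm_sub_sq_real a x₀
    have e2 : ‖b - v₀‖^2 = ‖b‖^2 - 2*⟪b, v₀⟫ + ‖v₀‖^2 := norm_sub_sq_real b v₀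
    have e3 : ‖x₀ + v₀‖^2 = ‖x₀‖^2 + 2*⟪x₀, v₀⟫ + ‖v₀‖^2 := norm_add_sq_real x₀ v₀
    have e4 : ⟪-x₀ - b, -v₀ - a⟫ = ⟪x₀, v₀⟫ + ⟪a, x₀⟫ + ⟪b, v₀⟫ + ⟪a, b⟫ := by
      simp only [inner_sub_left, inner_sub_right, inner_neg_left, inner_neg_right,
        real_inner_comm]
      ring
    rw [e4]
    linarith [hα₀, h1, sq_nonneg ‖x₀ + v₀‖]
  have hmem : -x₀ ∈ G (-v₀) := maxMono_mem hG hrel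
  have hfin := hvar (-v₀) (-x₀) hmem
  -- conclude v₀ = -x₀
  have e5 : ‖-v₀ - x₀‖^2 = ‖x₀ + v₀‖^2 := by
    rw [show -v₀ - x₀ = -(x₀ + v₀) by abel, norm_neg]
  have e6 : ‖-x₀ - v₀‖^2 = ‖x₀ + v₀‖^2 := by
    rw [show -x₀ - v₀ = -(x₀ + v₀) by abel, norm_neg]
  have e7 : ⟪-v₀, -x₀⟫ = ⟪x₀, v₀⟫ := by
    rw [inner_neg_neg, real_inner_comm]
  have e3 : ‖x₀ + v₀‖^2 = ‖x₀‖^2 + 2*⟪x₀, v₀⟫ + ‖v₀‖^2 := norm_add_sq_real x₀ v₀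
  have hzero : ‖x₀ + v₀‖^2 ≤ 0 := by
    simp only [norm_neg] at hfin
    linarith [hα₀, hfin, e5, e6, e7, e3]
  have hle0 : ‖x₀ + v₀‖ ≤ 0 := by nlinarith [hzero, norm_nonneg (x₀ + v₀)]
  have this : x₀ + v₀ = 0 := norm_eq_zero.1 (le_antisymm hle0 (norm_nonneg _))
  refine ⟨-v₀, ?_⟩
  have hv : -x₀ = v₀ := by
    have h := this
    rw [add_eq_zero_iff_eq_neg] at h
    rw [h, neg_neg]
  rw [neg_neg]
  rw [hv] at hmem
  exact hmem

lemma minty {G : X → Set X} (hG : MaxMono G) {lam : ℝ} (hlam : 0 < lam) (y : X) :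
    ∃ x v, v ∈ G x ∧ x + lam • v = y := by
  set G' : X → Set X := fun z => (fun w => lam • w - y) '' G z with hG'def
  have hmem' : ∀ z w, w ∈ G' z ↔ ∃ u ∈ G z, lam • u - y = w := by
    intro z w; simp [hG'def]
  have hmono' : Mono G' := by
    rintro ⟨p1, p2⟩ hp ⟨q1, q2⟩ hq
    dsimp only at *
    obtain ⟨u, hu, rfl⟩ := (hmem' _ _).1 hp
    obtain ⟨w, hw, rfl⟩ := (hmem' _ _).1 hq
    have h := hG.1 (p1, u) hu (q1, w) hw
    dsimp only at h
    have e : lam • u - y - (lam • w - y) = lam • (u - w) := by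
      rw [smul_sub]; abel
    rw [e, real_inner_smul_left]
    positivity
  have hmax' : MaxMono G' := by
    refine ⟨hmono', fun S hS hsub => ?_⟩
    set S' : X → Set X := fun z => (fun w => lam⁻¹ • (w + y)) '' S z with hS'def
    have hmemS' : ∀ z w, w ∈ S' z ↔ ∃ u ∈ S z, lam⁻¹ • (u + y) = w := by
      intro z w; simp [hS'def]
    have hmonoS' : Mono S' := by
      rintro ⟨p1, p2⟩ hp ⟨q1, q2⟩ hq
      dsimp only at *
      obtain ⟨u, hu, rfl⟩ := (hmemS' _ _).1 hp
      obtain ⟨w, hw, rfl⟩ := (hmemS' _ _).1 hq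
      have h := hS (p1, u) hu (q1, w) hw
      dsimp only at h
      have e : lam⁻¹ • (u + y) - lam⁻¹ • (w + y) = lam⁻¹ • (u - w) := by
        rw [← smul_sub]; congr 1; abel
      rw [e, real_inner_smul_left]
      have : (0:ℝ) < lam⁻¹ := by positivity
      positivity
    have hsubS' : gph G ⊆ gph S' := by
      rintro ⟨z, w⟩ hw
      have h1 : lam • w - y ∈ G' z := (hmem' _ _).2 ⟨w, hw, rfl⟩
      have h2 : (z, lam • w - y) ∈ gph S := hsub h1
      refine (hmemS' _ _).2 ⟨lam • w - y, h2, ?_⟩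
      rw [sub_add_cancel, inv_smul_smul₀ hlam.ne']
    have hSG := hG.2 S' hmonoS' hsubS'
    apply Set.Subset.antisymm _ hsub
    rintro ⟨z, w⟩ hw
    have h1 : (z, lam⁻¹ • (w + y)) ∈ gph S' := (hmemS' _ _).2 ⟨w, hw, rfl⟩
    rw [hSG] at h1
    refine (hmem' _ _).2 ⟨lam⁻¹ • (w + y), h1, ?_⟩
    rw [smul_inv_smul₀ hlam.ne', add_sub_cancel_right]
  obtain ⟨x, hx⟩ := minty_zero hmax'
  obtain ⟨v, hv, he⟩ := (hmem' _ _).1 hx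
  refine ⟨x, v, hv, ?_⟩
  have : lam • v = y - x := by
    have := he
    rw [sub_eq_iff_eq_add] at this
    -- this : lam • v = -x + y
    rw [this]; abel
  rw [this]; abel

lemma res_unique {G : X → Set X} (hmono : Mono G) {lam : ℝ} (hlam : 0 < lam)
    {x x' v v' : X} (hv : v ∈ G x) (hv' : v' ∈ G x')
    (he : x + lam • v = x' + lam • v') : x = x' := by
  have h := hmono (x, v) hv (x', v') hv'
  dsimp only at h
  have hx : x - x' = lam • (v' - v) := by
    rw [smul_sub]
    have e : x - x' - (lam • v' - lam • v) = x + lam • v - (x' + lam • v') := by abel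
    have e2 : x - x' - (lam • v' - lam • v) = 0 := by rw [e, he]; abel
    exact sub_eq_zero.1 e2
  rw [hx, real_inner_smul_right] at h
  have e3 : ⟪v - v', v' - v⟫ = -‖v - v'‖^2 := by
    rw [show v' - v = -(v - v') from (neg_sub v v').symm, inner_neg_right,
      real_inner_self_eq_norm_sq]
  rw [e3] at h
  have h6 : ‖v - v'‖^2 ≤ 0 := by nlinarith [h, hlam]
  have h5 : v - v' = 0 :=
    norm_eq_zero.1 (le_antisymm (by nlinarith [norm_nonneg (v - v'), h6]) (norm_nonneg _))
  have hvv : v' - v = 0 := by rw [← neg_sub v v', h5, neg_zero]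
  have hxx : x - x' = 0 := by rw [hx, hvv, smul_zero]
  exact sub_eq_zero.1 hxx

/-- Local maximal monotonicity of type (B) yields a continuous single-valued
localization of the resolvent `(I + λT)⁻¹` around `(x̄ + λx̄*, x̄)` for every `λ > 0`. -/
theorem stmt_6 (T : X → Set X) (xbar vbar : X) (hx : vbar ∈ T xbar)
    (hB : LocMaxBAt T xbar vbar) :
    ∀ lam : ℝ, 0 < lam → HasCSVLoc (res lam T) (xbar + lam • vbar) xbar := by
  obtain ⟨U, hU, V, hV, G, hG, hgraph⟩ := hB
  intro lam hlam
  set ybar := xbar + lam • vbar with hybar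
  have hxU : xbar ∈ U := mem_of_mem_nhds hU
  have hvV : vbar ∈ V := mem_of_mem_nhds hV
  have hxv : vbar ∈ G xbar := by
    have h1 : ((xbar, vbar) : X × X) ∈ gph T ∩ U ×ˢ V :=
      ⟨hx, Set.mk_mem_prod hxU hvV⟩
    rw [← hgraph] at h1
    exact h1.1
  obtain ⟨ε1, hε1, hU1⟩ := Metric.mem_nhds_iff.1 hU
  obtain ⟨ε2, hε2, hV2⟩ := Metric.mem_nhds_iff.1 hV
  set ε := min ε1 (lam * ε2 / 2) with hεdef
  have hεpos : 0 < ε := lt_min hε1 (by positivity)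
  have hballU : Metric.ball xbar ε ⊆ U :=
    (Metric.ball_subset_ball (min_le_left _ _)).trans hU1
  have hballV : Metric.ball vbar (2 * ε / lam) ⊆ V := by
    refine (Metric.ball_subset_ball ?_).trans hV2
    have h := min_le_right ε1 (lam * ε2 / 2)
    rw [div_le_iff₀ hlam]
    nlinarith
  have hres : ∀ y : X, ∃ x v, v ∈ G x ∧ x + lam • v = y := fun y => minty hG hlam y
  choose f vf hvf hsum using hres
  have hnon : ∀ y y', ‖f y - f y'‖ ≤ ‖y - y'‖ := by
    intro y y'
    have h := hG.1 (f y, vf y) (hvf y) (f y', vf y') (hvf y')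
    dsimp only at h
    have he : y - y' = (f y - f y') + lam • (vf y - vf y') := by
      rw [smul_sub]
      calc y - y' = (f y + lam • vf y) - (f y' + lam • vf y') := by
            rw [hsum y, hsum y']
        _ = f y - f y' + (lam • vf y - lam • vf y') := by abel
    have h2 : ‖f y - f y'‖^2 ≤ ⟪y - y', f y - f y'⟫ := by
      rw [he, inner_add_left, real_inner_smul_left, ← real_inner_self_eq_norm_sq]
      nlinarith [mul_nonneg hlam.le h]
    have h3 : ⟪y - y', f y - f y'⟫ ≤ ‖y - y'‖ * ‖f y - f y'‖ := real_inner_le_norm _ _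
    rcases eq_or_lt_of_le (norm_nonneg (f y - f y')) with h0 | h0
    · rw [← h0]; exact norm_nonneg _
    · have h4 : ‖f y - f y'‖ * ‖f y - f y'‖ ≤ ‖y - y'‖ * ‖f y - f y'‖ := by
        nlinarith [h2.trans h3]
      exact le_of_mul_le_mul_right h4 h0
  have hfbar : f ybar = xbar := by
    refine res_unique hG.1 hlam (hvf ybar) hxv ?_
    rw [hsum ybar]
  have hfmem : ∀ y, y ∈ Metric.ball ybar ε → f y ∈ Metric.ball xbar ε := by
    intro y hy
    rw [Metric.mem_ball, dist_eq_norm] at hy ⊢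
    calc ‖f y - xbar‖ = ‖f y - f ybar‖ := by rw [hfbar]
      _ ≤ ‖y - ybar‖ := hnon y ybar
      _ < ε := hy
  have hVmem : ∀ y x v, y ∈ Metric.ball ybar ε → x ∈ Metric.ball xbar ε →
      y = x + lam • v → v ∈ Metric.ball vbar (2 * ε / lam) := by
    intro y x v hy hxQ heq
    have h1 : lam • (v - vbar) = (y - ybar) - (x - xbar) := by
      rw [smul_sub, heq, hybar]
      abel
    have h2 : v - vbar = lam⁻¹ • ((y - ybar) - (x - xbar)) := by
      rw [← h1, inv_smul_smul₀ hlam.ne']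
    rw [Metric.mem_ball, dist_eq_norm, h2, norm_smul, Real.norm_eq_abs,
      abs_of_pos (inv_pos.2 hlam)]
    have hy' : ‖y - ybar‖ < ε := by rw [Metric.mem_ball, dist_eq_norm] at hy; exact hy
    have hx' : ‖x - xbar‖ < ε := by rw [Metric.mem_ball, dist_eq_norm] at hxQ; exact hxQ
    have h3 : ‖(y - ybar) - (x - xbar)‖ < 2 * ε :=
      lt_of_le_of_lt (norm_sub_le _ _) (by linarith)
    calc lam⁻¹ * ‖(y - ybar) - (x - xbar)‖ < lam⁻¹ * (2 * ε) :=
          mul_lt_mul_of_pos_left h3 (inv_pos.2 hlam)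
      _ = 2 * ε / lam := by field_simp
  refine ⟨Metric.ball ybar ε, Metric.ball_mem_nhds _ hεpos,
    Metric.ball xbar ε, Metric.ball_mem_nhds _ hεpos, f, ?_, hfmem, ?_⟩
  · have hlip : LipschitzWith 1 f := by
      refine LipschitzWith.of_dist_le_mul fun y y' => ?_
      rw [dist_eq_norm, dist_eq_norm, NNReal.coe_one, one_mul]
      exact hnon y y'
    exact hlip.continuous.continuousOn
  · intro y x
    constructor
    · rintro ⟨hxres, hyW, hxQ⟩
      obtain ⟨v, hvT, hyeq⟩ := hxres
      have hvG : v ∈ G x := by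
        have hmem : ((x, v) : X × X) ∈ gph T ∩ U ×ˢ V :=
          ⟨hvT, Set.mk_mem_prod (hballU hxQ) (hballV (hVmem y x v hyW hxQ hyeq))⟩
        rw [← hgraph] at hmem
        exact hmem.1
      refine ⟨hyW, ?_⟩
      refine res_unique hG.1 hlam hvG (hvf y) ?_
      rw [hsum y]
      exact hyeq.symm
    · rintro ⟨hyW, rfl⟩
      have hfQ : f y ∈ Metric.ball xbar ε := hfmem y hyW
      have hvT : vf y ∈ T (f y) := by
        have hmem : ((f y, vf y) : X × X) ∈ gph G ∩ U ×ˢ V :=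
          ⟨hvf y, Set.mk_mem_prod (hballU hfQ)
            (hballV (hVmem y (f y) (vf y) hyW hfQ (hsum y).symm))⟩
        rw [hgraph] at hmem
        exact hmem.1
      exact ⟨⟨vf y, hvT, (hsum y).symm⟩, hyW, hfQ⟩
end

section
/- Let X be a Hilbert space, σ > 0, and T : X ⇉ X with (x̄, x̄*) ∈ gph T. Then T is locally strongly maximal monotone of type (B) around (x̄, x̄*) with modulus σ if and only if T is locally strongly maximal monotone of type (A) around (x̄, x̄*) with modulus σ. -/
open Set Filter Topology RealInnerProductSpace

variable {X : Type*} [NormedAddCommGroup X] [InnerProductSpace ℝ X] [CompleteSpace X]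

section Aux
set_option linter.unusedSectionVars false
set_option maxHeartbeats 1000000

lemma aux_mid (a b q : X) : ‖((1:ℝ)/2)•(a+b) - q‖^2
    = (1/2)*‖a-q‖^2 + (1/2)*‖b-q‖^2 - (1/4)*‖a-b‖^2 := by
  have h : ∀ v : X, ‖v‖^2 = ⟪v,v⟫ := fun v => (real_inner_self_eq_norm_sq v).symm
  simp only [h, inner_sub_left, inner_sub_right, inner_add_left, inner_add_right,
    real_inner_smul_left, real_inner_smul_right]
  rw [real_inner_comm q a, real_inner_comm q b, real_inner_comm b a]
  ring

lemma aux_expand (y x e : X) : ‖y - e‖^2 = ‖x - e‖^2 + 2*⟪y-x, x-e⟫ + ‖y-x‖^2 := by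
  have h : ∀ v : X, ‖v‖^2 = ⟪v,v⟫ := fun v => (real_inner_self_eq_norm_sq v).symm
  simp only [h, inner_sub_left, inner_sub_right]
  rw [real_inner_comm x e, real_inner_comm y e, real_inner_comm y x]
  ring

lemma aux_bary {α : Type*} (s : Finset α) (w : α → ℝ) (hw1 : ∑ e ∈ s, w e = 1)
    (f : α → X) (x : X) :
    ∑ e ∈ s, ∑ e' ∈ s, w e * w e' * ‖f e - f e'‖^2
      = 2*(∑ e ∈ s, w e * ‖x - f e‖^2) - 2*‖x - ∑ e ∈ s, w e • f e‖^2 := by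
  have h : ∀ v : X, ‖v‖^2 = ⟪v,v⟫ := fun v => (real_inner_self_eq_norm_sq v).symm
  set b : X := ∑ e ∈ s, w e • f e with hbdef
  have hb : ∀ y : X, ⟪y, b⟫ = ∑ e ∈ s, w e * ⟪y, f e⟫ := by
    intro y; rw [hbdef, inner_sum]
    exact Finset.sum_congr rfl fun e _ => real_inner_smul_right _ _ _
  set S1 : ℝ := ∑ e ∈ s, w e * ⟪f e, f e⟫ with hS1
  set S2 : ℝ := ∑ e ∈ s, ∑ e' ∈ s, w e * w e' * ⟪f e, f e'⟫ with hS2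
  set P : ℝ := ∑ e ∈ s, w e * ⟪x, f e⟫ with hP
  have hxb : ⟪x, b⟫ = P := hb x
  have hbb : ⟪b, b⟫ = S2 := by
    rw [hb b, hS2]
    refine Finset.sum_congr rfl fun e he => ?_
    rw [real_inner_comm (f e) b, hb (f e), Finset.mul_sum]
    refine Finset.sum_congr rfl fun e' he' => ?_
    ring
  have hL : ∑ e ∈ s, ∑ e' ∈ s, w e * w e' * ‖f e - f e'‖^2 = 2*S1 - 2*S2 := by
    have step : ∑ e ∈ s, ∑ e' ∈ s, w e * w e' * ‖f e - f e'‖^2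
        = ∑ e ∈ s, ∑ e' ∈ s, (w e * w e' * ⟪f e, f e⟫ + w e * w e' * ⟪f e', f e'⟫
            - 2*(w e * w e' * ⟪f e, f e'⟫)) := by
      refine Finset.sum_congr rfl fun e _ => Finset.sum_congr rfl fun e' _ => ?_
      rw [h]; simp only [inner_sub_left, inner_sub_right]
      rw [real_inner_comm (f e') (f e)]; ring
    rw [step]
    simp only [Finset.sum_add_distrib, Finset.sum_sub_distrib, ← Finset.mul_sum]
    have e1 : ∑ e ∈ s, ∑ e' ∈ s, w e * w e' * ⟪f e, f e⟫ = S1 := by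
      rw [hS1]
      refine Finset.sum_congr rfl fun e _ => ?_
      have : ∑ e' ∈ s, w e * w e' * ⟪f e, f e⟫ = (w e * ⟪f e, f e⟫) * ∑ e' ∈ s, w e' := by
        rw [Finset.mul_sum]; exact Finset.sum_congr rfl fun e' _ => by ring
      rw [this, hw1, mul_one]
    have e2 : ∑ e ∈ s, ∑ e' ∈ s, w e * w e' * ⟪f e', f e'⟫ = S1 := by
      rw [Finset.sum_comm, hS1]
      refine Finset.sum_congr rfl fun e' _ => ?_
      have : ∑ e ∈ s, w e * w e' * ⟪f e', f e'⟫ = (w e' * ⟪f e', f e'⟫) * ∑ e ∈ s, w e := by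
        rw [Finset.mul_sum]; exact Finset.sum_congr rfl fun e _ => by ring
      rw [this, hw1, mul_one]
    rw [e1, e2, ← hS2]; ring
  have hR1 : ∑ e ∈ s, w e * ‖x - f e‖^2 = ⟪x,x⟫ - 2*P + S1 := by
    have step : ∑ e ∈ s, w e * ‖x - f e‖^2
        = ∑ e ∈ s, (w e * ⟪x,x⟫ - 2*(w e * ⟪x, f e⟫) + w e * ⟪f e, f e⟫) := by
      refine Finset.sum_congr rfl fun e _ => ?_
      rw [h]; simp only [inner_sub_left, inner_sub_right]
      rw [real_inner_comm (f e) x]; ring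
    rw [step]
    simp only [Finset.sum_add_distrib, Finset.sum_sub_distrib, ← Finset.mul_sum,
      ← Finset.sum_mul]
    rw [hw1, hS1, hP]; ring
  have hR2 : ‖x - b‖^2 = ⟪x,x⟫ - 2*P + S2 := by
    have hbx : ⟪b, x⟫ = P := by rw [real_inner_comm]; exact hxb
    rw [h]; simp only [inner_sub_left, inner_sub_right]
    simp only [hbx, hxb, hbb]; ring
  rw [hL, hR1, hR2]; ring

lemma finKir {ι : Type*} (F : Finset ι) (hF : F.Nonempty) (p q : ι → X) (z : X)
    (hpq : ∀ i ∈ F, ∀ j ∈ F, ‖q i - q j‖ ≤ ‖p i - p j‖) :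
    ∃ (x : X) (m : ℝ), m ≤ 0 ∧ (∀ i ∈ F, ‖x - q i‖^2 - ‖z - p i‖^2 ≤ m) ∧
      ∀ y c, (∀ i ∈ F, ‖y - q i‖^2 - ‖z - p i‖^2 ≤ c) → m + ‖y - x‖^2 ≤ c := by
  classical
  have hF' := hF
  obtain ⟨i₀, hi₀⟩ := hF'
  set g : ι → X → ℝ := fun i y => ‖y - q i‖^2 - ‖z - p i‖^2 with hg
  set f : X → ℝ := fun y => F.sup' hF (fun i => g i y) with hf
  have hfg : ∀ y, ∀ i ∈ F, g i y ≤ f y := fun y i hi => by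
    simpa only [hf] using Finset.le_sup' (fun j => g j y) hi
  have hsup : ∀ y c, (∀ i ∈ F, g i y ≤ c) → f y ≤ c := fun y c h => Finset.sup'_le _ _ h
  have hatt : ∀ y, ∃ i, i ∈ F ∧ f y = g i y := fun y => Finset.exists_mem_eq_sup' hF _
  have hsuplt : ∀ y c, (∀ i ∈ F, g i y < c) → f y < c := fun y c h => (Finset.sup'_lt_iff hF).mpr h
  have hbdd : BddBelow (Set.range f) := by
    refine ⟨-‖z - p i₀‖^2, ?_⟩
    rintro r ⟨y, rfl⟩
    refine le_trans ?_ (hfg y i₀ hi₀)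
    have := sq_nonneg ‖y - q i₀‖
    simp only [hg]; nlinarith [sq_nonneg ‖y - q i₀‖]
  set m : ℝ := ⨅ y, f y with hm
  have hmle : ∀ y, m ≤ f y := fun y => ciInf_le hbdd y
  -- minimizing sequence
  have hseq : ∀ n : ℕ, ∃ y, f y < m + 1/(n+1) := by
    intro n
    have hlt : m < m + 1/(n+1) := by
      have : (0:ℝ) < 1/(n+1) := by positivity
      linarith
    exact exists_lt_of_ciInf_lt hlt
  choose u hu using hseq
  clear_value g f m
  -- midpoint strong convexity
  have hmidf : ∀ a b : X, f (((1:ℝ)/2)•(a+b)) ≤ (1/2)*f a + (1/2)*f b - (1/4)*‖a-b‖^2 := by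
    intro a b
    refine hsup _ _ fun i hi => ?_
    have : g i (((1:ℝ)/2)•(a+b)) = (1/2)*(g i a) + (1/2)*(g i b) - (1/4)*‖a-b‖^2 := by
      simp only [hg]; rw [aux_mid a b (q i)]; ring
    rw [this]
    have h1 := hfg a i hi; have h2 := hfg b i hi
    linarith
  have hcau : CauchySeq u := by
    rw [Metric.cauchySeq_iff]
    intro ε hε
    obtain ⟨N, hN⟩ := exists_nat_gt (4/ε^2)
    refine ⟨N, fun a ha b hb => ?_⟩
    have hsq : ‖u a - u b‖^2 ≤ 4*((1/2)*f (u a) + (1/2)*f (u b) - m) := by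
      have := hmidf (u a) (u b)
      have := hmle (((1:ℝ)/2)•(u a + u b))
      linarith
    have h1 : f (u a) < m + 1/(a+1) := hu a
    have h2 : f (u b) < m + 1/(b+1) := hu b
    have hA : (1:ℝ)/(a+1) ≤ 1/(N+1) := by
      apply one_div_le_one_div_of_le (by positivity)
      exact_mod_cast Nat.succ_le_succ ha
    have hB : (1:ℝ)/(b+1) ≤ 1/(N+1) := by
      apply one_div_le_one_div_of_le (by positivity)
      exact_mod_cast Nat.succ_le_succ hb
    have hsq2 : ‖u a - u b‖^2 ≤ 4/(N+1) := by
      have : ‖u a - u b‖^2 ≤ 4*((1/2)*(m + 1/(a+1)) + (1/2)*(m + 1/(b+1)) - m) := by linarith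
      calc ‖u a - u b‖^2 ≤ 2*(1/(a+1)) + 2*(1/(b+1)) := by linarith
        _ ≤ 4/(N+1) := by rw [div_eq_mul_one_div 4]; linarith
    have hNe : 4/((N:ℝ)+1) < ε^2 := by
      rw [div_lt_iff₀ (by positivity)]
      have h4 : 4/ε^2 < (N:ℝ) := hN
      have := (div_lt_iff₀ (by positivity : (0:ℝ) < ε^2)).mp h4
      nlinarith
    rw [dist_eq_norm]
    nlinarith [norm_nonneg (u a - u b), hε]
  obtain ⟨xs, hxs⟩ := cauchySeq_tendsto_of_complete hcau
  -- limit satisfies g i xs ≤ m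
  have hgi : ∀ i ∈ F, g i xs ≤ m := by
    intro i hi
    have hcont : Continuous (fun y => g i y) := by
      simp only [hg]; fun_prop
    have ht1 : Filter.Tendsto (fun n => g i (u n)) atTop (nhds (g i xs)) :=
      (hcont.tendsto xs).comp hxs
    have ht2 : Filter.Tendsto (fun n : ℕ => m + 1/((n:ℝ)+1)) atTop (nhds m) := by
      have := tendsto_one_div_add_atTop_nhds_zero_nat (𝕜 := ℝ)
      have := tendsto_const_nhds (x := m) (f := atTop (α := ℕ)) |>.add this
      simpa using this
    refine le_of_tendsto_of_tendsto ht1 ht2 ?_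
    filter_upwards with n
    exact le_of_lt (lt_of_le_of_lt (hfg (u n) i hi) (hu n))
  have hfxs : f xs = m := le_antisymm (hsup _ _ hgi) (hmle xs)
  -- active set
  set A : Finset ι := F.filter (fun i => m ≤ g i xs) with hA
  have hAsub : A ⊆ F := Finset.filter_subset _ _
  have hAmem : ∀ i, i ∈ A ↔ (i ∈ F ∧ m ≤ g i xs) := fun i => by rw [hA, Finset.mem_filter]
  have hAval : ∀ i ∈ A, g i xs = m := by
    intro i hi
    rw [hAmem] at hi
    exact le_antisymm (hgi i hi.1) hi.2
  have hAne : A.Nonempty := by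
    obtain ⟨i, hi, hieq⟩ := hatt xs
    exact ⟨i, (hAmem i).mpr ⟨hi, by rw [← hieq, hfxs]⟩⟩
  set s : Finset X := A.image q with hs
  have hsne : s.Nonempty := hAne.image q
  -- xs lies in the convex hull of the active points
  have hhull : xs ∈ convexHull ℝ (↑s : Set X) := by
    by_contra hxs'
    obtain ⟨l, u0, hlt, hgt⟩ := geometric_hahn_banach_closed_point
      (convex_convexHull ℝ _) (s.finite_toSet.isClosed_convexHull ℝ) hxs'
    set d : X := (InnerProductSpace.toDual ℝ X).symm l with hd
    have hdi : ∀ y : X, ⟪d, y⟫ = l y := fun y => InnerProductSpace.toDual_symm_apply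
    set c0 : ℝ := l xs - u0 with hc0
    have hc0pos : 0 < c0 := by rw [hc0]; linarith [hgt]
    have hdA : ∀ i ∈ A, c0 ≤ ⟪d, xs - q i⟫ := by
      intro i hi
      have hqC : q i ∈ convexHull ℝ (↑s : Set X) := by
        refine subset_convexHull ℝ _ ?_
        rw [hs]; exact_mod_cast Finset.mem_image_of_mem q hi
      have := hlt _ hqC
      rw [inner_sub_right, hdi, hdi]
      linarith
    have hdpos : 0 < ‖d‖^2 := by
      rcases hAne with ⟨i, hi⟩
      have h1 := hdA i hi
      by_contra hcon
      push_neg at hcon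
      have hn0 : ‖d‖^2 = 0 := le_antisymm hcon (sq_nonneg _)
      have : d = 0 := by
        have := (pow_eq_zero_iff (n := 2) (by norm_num)).mp hn0
        simpa using this
      rw [this, inner_zero_left] at h1; linarith
    set tA : ℝ := c0 / ‖d‖^2 with htAdef
    have htA : 0 < tA := div_pos hc0pos hdpos
    set tI : ι → ℝ :=
      fun i => if m ≤ g i xs then tA else (m - g i xs)/(2*‖d‖*‖xs - q i‖ + ‖d‖^2 + 1) with htI
    have htIpos : ∀ i ∈ F, 0 < tI i := by
      intro i hi; rw [htI]; dsimp only
      split_ifs with hcase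
      · exact htA
      · push_neg at hcase
        apply div_pos (by linarith) (by positivity)
    set t : ℝ := min 1 (F.inf' hF tI) with ht
    have htpos : 0 < t := lt_min one_pos (by rw [Finset.lt_inf'_iff]; exact htIpos)
    have ht1 : t ≤ 1 := min_le_left _ _
    have htle : ∀ i ∈ F, t ≤ tI i := fun i hi => le_trans (min_le_right _ _) (Finset.inf'_le _ hi)
    have hper : f (xs - t • d) < m := by
      refine hsuplt _ _ fun i hi => ?_
      have hexp0 : ‖xs - t•d - q i‖^2 = ‖xs - q i‖^2 - 2*t*⟪d, xs - q i⟫ + t^2*‖d‖^2 := by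
        have h1 : xs - t•d - q i = (xs - q i) - t•d := by abel
        rw [h1, norm_sub_sq_real, real_inner_smul_right, real_inner_comm, norm_smul]
        simp [mul_pow, sq_abs]
        ring
      have hexp : g i (xs - t•d) = g i xs - 2*t*⟪d, xs - q i⟫ + t^2*‖d‖^2 := by
        simp only [hg]; rw [hexp0]; ring
      rcases le_or_gt m (g i xs) with hact | hnact
      · have hval : g i xs = m := le_antisymm (hgi i hi) hact
        have hti : t ≤ tA := by
          have h2 := htle i hi; rw [htI] at h2; simpa [hact] using h2
        have hcle : c0 ≤ ⟪d, xs - q i⟫ := hdA i ((hAmem i).mpr ⟨hi, hact⟩)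
        have ht2 : t * ‖d‖^2 ≤ c0 := by
          rw [htAdef] at hti
          exact (le_div_iff₀ hdpos).mp hti
        rw [hexp, hval]
        nlinarith [mul_le_mul_of_nonneg_left hcle (le_of_lt htpos), htpos, hc0pos]
      · have hti : t ≤ (m - g i xs)/(2*‖d‖*‖xs - q i‖ + ‖d‖^2 + 1) := by
          have h2 := htle i hi; rw [htI] at h2; simpa [not_le.mpr hnact] using h2
        have hD : t*(2*‖d‖*‖xs - q i‖ + ‖d‖^2 + 1) ≤ m - g i xs :=
          (le_div_iff₀ (by positivity)).mp hti
        have hCS : -⟪d, xs - q i⟫ ≤ ‖d‖*‖xs - q i‖ := by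
          have := abs_real_inner_le_norm d (xs - q i)
          have := neg_abs_le (⟪d, xs - q i⟫)
          linarith
        rw [hexp]
        have e0 : 0 ≤ t*(1-t)*‖d‖^2 :=
          mul_nonneg (mul_nonneg htpos.le (sub_nonneg.mpr ht1)) (sq_nonneg _)
        have e1 : t^2*‖d‖^2 ≤ t*‖d‖^2 := by nlinarith [e0]
        have e2 : -(2*t*⟪d, xs - q i⟫) ≤ 2*t*(‖d‖*‖xs - q i‖) := by
          nlinarith [mul_le_mul_of_nonneg_left hCS htpos.le]
        have e3 : t*(2*‖d‖*‖xs - q i‖) + t*‖d‖^2 + t ≤ m - g i xs := by nlinarith [hD]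
        linarith [e1, e2, e3, htpos]
    exact absurd (hmle (xs - t•d)) (not_le.mpr hper)
  -- extract convex weights
  rw [Finset.convexHull_eq] at hhull
  obtain ⟨w, hw0, hw1, hwc⟩ := hhull
  rw [Finset.centerMass_eq_of_sum_1 _ id hw1] at hwc
  simp only [id] at hwc
  have : Nonempty ι := ⟨i₀⟩
  have hpre : ∀ e ∈ s, ∃ i, i ∈ A ∧ q i = e := by
    intro e he; rw [hs] at he
    obtain ⟨i, hi, rfl⟩ := Finset.mem_image.mp he; exact ⟨i, hi, rfl⟩
  choose! ρ hρA hρq using hpre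
  have hρF : ∀ e ∈ s, ρ e ∈ F := fun e he => hAsub (hρA e he)
  have hkey : ∀ e ∈ s, ‖xs - e‖^2 - ‖z - p (ρ e)‖^2 = m := by
    intro e he
    have h1 := hAval _ (hρA e he)
    simp only [hg] at h1
    rw [hρq e he] at h1
    exact h1
  have hmsum : ∑ e ∈ s, w e * (‖xs - e‖^2 - ‖z - p (ρ e)‖^2) = m := by
    rw [Finset.sum_congr rfl (fun e he => by rw [hkey e he])]
    rw [← Finset.sum_mul, hw1, one_mul]
  -- m ≤ 0
  have hm0 : m ≤ 0 := by
    have hid1 := aux_bary s w hw1 (fun e => e) xs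
    have hid2 := aux_bary s w hw1 (fun e => p (ρ e)) z
    rw [hwc] at hid1
    simp only [sub_self, norm_zero] at hid1
    have hcomp : ∑ e ∈ s, ∑ e' ∈ s, w e * w e' * ‖e - e'‖^2
        ≤ ∑ e ∈ s, ∑ e' ∈ s, w e * w e' * ‖p (ρ e) - p (ρ e')‖^2 := by
      refine Finset.sum_le_sum fun e he => Finset.sum_le_sum fun e' he' => ?_
      have hq := hpq (ρ e) (hρF e he) (ρ e') (hρF e' he')
      rw [hρq e he, hρq e' he'] at hq
      have h2 : ‖e - e'‖^2 ≤ ‖p (ρ e) - p (ρ e')‖^2 := by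
        nlinarith [norm_nonneg (e - e'), norm_nonneg (p (ρ e) - p (ρ e'))]
      exact mul_le_mul_of_nonneg_left h2 (mul_nonneg (hw0 e he) (hw0 e' he'))
    have hsplit : ∑ e ∈ s, w e * (‖xs - e‖^2 - ‖z - p (ρ e)‖^2)
        = (∑ e ∈ s, w e * ‖xs - e‖^2) - ∑ e ∈ s, w e * ‖z - p (ρ e)‖^2 := by
      rw [← Finset.sum_sub_distrib]
      exact Finset.sum_congr rfl fun e _ => by ring
    nlinarith [sq_nonneg ‖z - ∑ e ∈ s, w e • p (ρ e)‖, hmsum, hsplit]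
  refine ⟨xs, m, hm0, fun i hi => by have := hgi i hi; simp only [hg] at this; exact this, ?_⟩
  intro y c hc
  have hzero : ∑ e ∈ s, w e • (xs - e) = 0 := by
    have : ∑ e ∈ s, w e • (xs - e) = (∑ e ∈ s, w e) • xs - ∑ e ∈ s, w e • e := by
      rw [Finset.sum_smul, ← Finset.sum_sub_distrib]
      exact Finset.sum_congr rfl fun e _ => smul_sub _ _ _
    rw [this, hw1, one_smul, hwc, sub_self]
  have hinner0 : ∑ e ∈ s, w e * ⟪y - xs, xs - e⟫ = 0 := by
    have : ∑ e ∈ s, w e * ⟪y - xs, xs - e⟫ = ⟪y - xs, ∑ e ∈ s, w e • (xs - e)⟫ := by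
      rw [inner_sum]
      exact Finset.sum_congr rfl fun e _ => (real_inner_smul_right _ _ _).symm
    rw [this, hzero, inner_zero_right]
  have hexp2 : ∑ e ∈ s, w e * (‖y - e‖^2 - ‖z - p (ρ e)‖^2) = m + ‖y - xs‖^2 := by
    have hterm : ∀ e ∈ s, w e * (‖y - e‖^2 - ‖z - p (ρ e)‖^2)
        = w e * (‖xs - e‖^2 - ‖z - p (ρ e)‖^2) + 2*(w e * ⟪y - xs, xs - e⟫) + w e * ‖y - xs‖^2 := by
      intro e _
      rw [aux_expand y xs e]; ring
    rw [Finset.sum_congr rfl hterm, Finset.sum_add_distrib, Finset.sum_add_distrib,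
      ← Finset.mul_sum, hinner0, ← Finset.sum_mul, hw1, hmsum]
    ring
  rw [← hexp2]
  have hle : ∀ e ∈ s, w e * (‖y - e‖^2 - ‖z - p (ρ e)‖^2) ≤ w e * c := by
    intro e he
    have h1 := hc (ρ e) (hρF e he)
    rw [hρq e he] at h1
    exact mul_le_mul_of_nonneg_left h1 (hw0 e he)
  calc ∑ e ∈ s, w e * (‖y - e‖^2 - ‖z - p (ρ e)‖^2) ≤ ∑ e ∈ s, w e * c :=
        Finset.sum_le_sum hle
    _ = c := by rw [← Finset.sum_mul, hw1, one_mul]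

lemma infKir {ι : Type*} [Nonempty ι] (M : Set ι) (hM : M.Nonempty) (p q : ι → X) (z : X)
    (hpq : ∀ i ∈ M, ∀ j ∈ M, ‖q i - q j‖ ≤ ‖p i - p j‖) :
    ∃ x : X, ∀ i ∈ M, ‖x - q i‖ ≤ ‖z - p i‖ := by
  classical
  -- choose minimizers for each admissible finite subfamily
  have hch : ∀ F : Finset ι, ∃ xm : X × ℝ, (F.Nonempty ∧ ↑F ⊆ M) →
      (xm.2 ≤ 0 ∧ (∀ i ∈ F, ‖xm.1 - q i‖^2 - ‖z - p i‖^2 ≤ xm.2) ∧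
        ∀ y c, (∀ i ∈ F, ‖y - q i‖^2 - ‖z - p i‖^2 ≤ c) → xm.2 + ‖y - xm.1‖^2 ≤ c) := by
    intro F
    by_cases hcond : F.Nonempty ∧ ↑F ⊆ M
    · obtain ⟨x, m, h1, h2, h3⟩ := finKir F hcond.1 p q z
        (fun i hi j hj => hpq i (hcond.2 hi) j (hcond.2 hj))
      exact ⟨(x, m), fun _ => ⟨h1, h2, h3⟩⟩
    · exact ⟨(z, 0), fun h => absurd h hcond⟩
  choose xm hxm using hch
  set xf : Finset ι → X := fun F => (xm F).1 with hxf
  set mf : Finset ι → ℝ := fun F => (xm F).2 with hmf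
  -- admissibility predicate
  set adm : Finset ι → Prop := fun F => F.Nonempty ∧ ↑F ⊆ M with hadm
  have hneg : ∀ F, adm F → mf F ≤ 0 := fun F hc => ((hxm F) hc).1
  have hval : ∀ F, adm F → ∀ i ∈ F, ‖xf F - q i‖^2 - ‖z - p i‖^2 ≤ mf F :=
    fun F hc => ((hxm F) hc).2.1
  have hcert : ∀ F, adm F → ∀ y c, (∀ i ∈ F, ‖y - q i‖^2 - ‖z - p i‖^2 ≤ c) →
      mf F + ‖y - xf F‖^2 ≤ c := fun F hc => ((hxm F) hc).2.2
  have hchain : ∀ F F', adm F → adm F' → F ⊆ F' →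
      mf F + ‖xf F' - xf F‖^2 ≤ mf F' := by
    intro F F' hc hc' hss
    exact hcert F hc (xf F') (mf F') (fun i hi => hval F' hc' i (hss hi))
  have hmono : ∀ F F', adm F → adm F' → F ⊆ F' → mf F ≤ mf F' := by
    intro F F' hc hc' hss
    have := hchain F F' hc hc' hss
    nlinarith [sq_nonneg ‖xf F' - xf F‖]
  -- supremum of the finite values
  obtain ⟨i₀, hi₀⟩ := hM
  set SS : Set ℝ := {r | ∃ F, adm F ∧ r = mf F} with hSS
  have hSSne : SS.Nonempty := ⟨mf {i₀}, ⟨{i₀}, ⟨Finset.singleton_nonempty _, by simpa using hi₀⟩, rfl⟩⟩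
  have hSSbdd : BddAbove SS := by
    refine ⟨0, ?_⟩; rintro r ⟨F, hc, rfl⟩; exact hneg F hc
  set sup : ℝ := sSup SS with hsup
  have hles : ∀ F, adm F → mf F ≤ sup := fun F hc => le_csSup hSSbdd ⟨F, hc, rfl⟩
  have hseq : ∀ n : ℕ, ∃ F, adm F ∧ sup - 1/(n+1) < mf F := by
    intro n
    have hlt : sup - 1/(n+1) < sup := by
      have : (0:ℝ) < 1/(n+1) := by positivity
      linarith
    obtain ⟨r, ⟨F, hc, rfl⟩, hr⟩ := exists_lt_of_lt_csSup hSSne hlt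
    exact ⟨F, hc, hr⟩
  choose Fs hFs using hseq
  set Gs : ℕ → Finset ι := fun n => (Finset.range (n+1)).sup Fs with hGs
  have hGadm : ∀ n, adm (Gs n) := by
    intro n
    constructor
    · exact (hFs n).1.1.mono (Finset.le_sup (Finset.self_mem_range_succ n))
    · intro i hi
      rw [hGs] at hi
      simp only [Finset.mem_sup] at hi
      obtain ⟨k, hk, hik⟩ := (Finset.mem_sup.mp hi)
      exact (hFs k).1.2 hik
  have hGmono : ∀ n k, n ≤ k → Gs n ⊆ Gs k := by
    intro n k hnk
    have h := Finset.sup_mono (f := Fs) (Finset.range_subset_range.mpr (Nat.succ_le_succ hnk))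
    exact h
  have hGlow : ∀ n, sup - 1/(n+1) < mf (Gs n) := by
    intro n
    refine lt_of_lt_of_le (hFs n).2 ?_
    exact hmono _ _ (hFs n).1 (hGadm n) (Finset.le_sup (Finset.self_mem_range_succ n))
  have hcau : CauchySeq (fun n => xf (Gs n)) := by
    rw [Metric.cauchySeq_iff]
    intro ε hε
    obtain ⟨N, hN⟩ := exists_nat_gt (1/ε^2)
    refine ⟨N, fun a ha b hb => ?_⟩
    wlog hab : b ≤ a generalizing a b
    · rw [dist_comm]; exact this b hb a ha (by omega)
    have h1 : ‖xf (Gs a) - xf (Gs b)‖^2 ≤ mf (Gs a) - mf (Gs b) := by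
      have := hchain (Gs b) (Gs a) (hGadm b) (hGadm a) (hGmono b a hab)
      linarith
    have h2 : mf (Gs a) - mf (Gs b) ≤ 1/(b+1) := by
      have := hles (Gs a) (hGadm a)
      have := hGlow b
      linarith
    have h3 : (1:ℝ)/(b+1) ≤ 1/(N+1) := by
      apply one_div_le_one_div_of_le (by positivity)
      exact_mod_cast Nat.succ_le_succ hb
    have h4 : 1/((N:ℝ)+1) < ε^2 := by
      rw [div_lt_iff₀ (by positivity)]
      have := (div_lt_iff₀ (by positivity : (0:ℝ) < ε^2)).mp hN
      nlinarith
    rw [dist_eq_norm]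
    nlinarith [norm_nonneg (xf (Gs a) - xf (Gs b)), hε]
  obtain ⟨xst, hxst⟩ := cauchySeq_tendsto_of_complete hcau
  refine ⟨xst, fun i hi => ?_⟩
  -- for each i, compare with the augmented families
  have key : ∀ n : ℕ, ‖xst - q i‖ ≤ ‖z - p i‖ + 2*Real.sqrt (1/(n+1)) + dist xst (xf (Gs n)) := by
    intro n
    set H : Finset ι := insert i (Gs n) with hH
    have hHadm : adm H := by
      constructor
      · exact Finset.insert_nonempty _ _
      · intro j hj
        rw [hH] at hj
        simp only [Finset.coe_insert, Set.mem_insert_iff] at hj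
        rcases hj with rfl | hj
        · exact hi
        · exact (hGadm n).2 hj
    have h1 : ‖xf H - xf (Gs n)‖^2 ≤ 1/(n+1) := by
      have hc := hchain (Gs n) H (hGadm n) hHadm (Finset.subset_insert _ _)
      have := hles H hHadm
      have := hGlow n
      linarith
    have h2 : ‖xf H - q i‖ ≤ ‖z - p i‖ := by
      have := hval H hHadm i (Finset.mem_insert_self _ _)
      have h3 := hneg H hHadm
      nlinarith [norm_nonneg (xf H - q i), norm_nonneg (z - p i)]
    have h4 : ‖xf H - xf (Gs n)‖ ≤ Real.sqrt (1/(n+1)) := by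
      rw [show (1:ℝ)/(n+1) = Real.sqrt (1/(n+1))^2 by
        rw [Real.sq_sqrt (by positivity)]] at h1
      nlinarith [norm_nonneg (xf H - xf (Gs n)), Real.sqrt_nonneg ((1:ℝ)/(n+1))]
    calc ‖xst - q i‖ ≤ ‖xst - xf (Gs n)‖ + ‖xf (Gs n) - xf H‖ + ‖xf H - q i‖ := by
          have := norm_sub_le_norm_sub_add_norm_sub xst (xf (Gs n)) (q i)
          have := norm_sub_le_norm_sub_add_norm_sub (xf (Gs n)) (xf H) (q i)
          linarith
      _ ≤ ‖z - p i‖ + 2*Real.sqrt (1/(n+1)) + dist xst (xf (Gs n)) := by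
          rw [dist_eq_norm]
          have : ‖xf (Gs n) - xf H‖ = ‖xf H - xf (Gs n)‖ := norm_sub_rev _ _
          have hs1 : (0:ℝ) ≤ Real.sqrt (1/(n+1)) := Real.sqrt_nonneg _
          linarith [h4, h2]
  -- pass to the limit
  have hlim : Filter.Tendsto
      (fun n : ℕ => ‖z - p i‖ + 2*Real.sqrt (1/(n+1)) + dist xst (xf (Gs n)))
      atTop (nhds (‖z - p i‖ + 0 + 0)) := by
    apply Filter.Tendsto.add
    apply Filter.Tendsto.add tendsto_const_nhds
    · have h1 : Filter.Tendsto (fun n : ℕ => (1:ℝ)/(n+1)) atTop (nhds 0) :=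
        tendsto_one_div_add_atTop_nhds_zero_nat
      have h2 := (Real.continuous_sqrt.tendsto 0).comp h1
      simp only [Real.sqrt_zero] at h2
      have := h2.const_mul 2
      simpa using this
    · have := (tendsto_iff_dist_tendsto_zero.mp hxst)
      simpa [dist_comm] using this
  have hfin := ge_of_tendsto hlim (Filter.Eventually.of_forall key)
  simpa using hfin

lemma one_point {σ : ℝ} {G : X → Set X} (hG : StrMaxMono σ G) {y u : X}
    (h : ∀ a b, b ∈ G a → σ * ‖y - a‖^2 ≤ ⟪u - b, y - a⟫) : u ∈ G y := by
  classical
  set S : X → Set X := fun a => if a = y then insert u (G a) else G a with hS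
  have hgph : gph S = insert (y, u) (gph G) := by
    ext r
    simp only [gph, hS, Set.mem_setOf_eq, Set.mem_insert_iff]
    constructor
    · intro hr
      by_cases hay : r.1 = y
      · rw [if_pos hay] at hr
        rcases hr with hr | hr
        · left; rw [← hay, ← hr]
        · right; exact hr
      · rw [if_neg hay] at hr; right; exact hr
    · intro hr
      rcases hr with hr | hr
      · rw [hr]; simp only [if_pos rfl]; exact Set.mem_insert _ _
      · by_cases hay : r.1 = y
        · rw [if_pos hay]; exact Set.mem_insert_of_mem _ hr
        · rw [if_neg hay]; exact hr
  have hmem : ∀ r : X × X, r ∈ gph S → r = (y, u) ∨ r ∈ gph G := by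
    intro r hr; rw [hgph] at hr; exact hr
  have hcase : ∀ a b, b ∈ G a → σ * ‖a - y‖^2 ≤ ⟪b - u, a - y⟫ := by
    intro a b hb
    have h1 := h a b hb
    have heq : ⟪b - u, a - y⟫ = ⟪u - b, y - a⟫ := by
      rw [show b - u = -(u - b) by simp, show a - y = -(y - a) by simp, inner_neg_neg]
    rw [heq, norm_sub_rev]
    exact h1
  have hstr : StrMono σ S := by
    intro r hr t ht
    rcases hmem r hr with hr' | hrG <;> rcases hmem t ht with ht' | htG
    · rw [hr', ht']; simp
    · rw [hr']
      simpa using h t.1 t.2 htG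
    · rw [ht']
      simpa using hcase r.1 r.2 hrG
    · exact hG.1 r hrG t htG
  have hsub : gph G ⊆ gph S := by rw [hgph]; exact Set.subset_insert _ _
  have heqg := hG.2 S hstr hsub
  have hyu : (y, u) ∈ gph S := by rw [hgph]; exact Set.mem_insert _ _
  rw [heqg] at hyu
  exact hyu

lemma strmax_surj {σ : ℝ} (hσ : 0 < σ) {G : X → Set X} (hG : StrMaxMono σ G)
    (hne : (gph G).Nonempty) (v : X) : ∃ x, v ∈ G x := by
  have hXne : Nonempty (X × X) := ⟨(0, 0)⟩
  set c : ℝ := (2*σ)⁻¹ with hc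
  have hcpos : 0 < c := by rw [hc]; positivity
  have hkey := infKir (ι := X × X) (gph G) hne
    (fun i => c • i.2) (fun i => i.1 + c • (v - i.2)) (c • v) ?_
  · obtain ⟨x, hx⟩ := hkey
    refine ⟨x, one_point hG fun a b hb => ?_⟩
    have h1 := hx (a, b) hb
    have h2 : ‖x - (a + c • (v - b))‖^2 ≤ ‖c • v - c • b‖^2 := by
      nlinarith [norm_nonneg (x - (a + c • (v - b))), norm_nonneg (c • v - c • b)]
    have hrw : x - (a + c • (v - b)) = (x - a) - c • (v - b) := by abel
    rw [hrw, ← smul_sub c v b] at h2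
    rw [norm_sub_sq_real, real_inner_smul_right, real_inner_comm, norm_smul] at h2
    -- h2 : ‖x-a‖² - 2(c⟪v-b, x-a⟫) + (|c|‖v-b‖)² ≤ (|c|‖v-b‖)²
    have h3 : ‖x - a‖^2 ≤ 2*c*⟪v - b, x - a⟫ := by nlinarith [h2]
    have h4 : σ * ‖x - a‖^2 ≤ 2*σ*c*⟪v - b, x - a⟫ := by nlinarith [h3, hσ]
    have h5 : 2*σ*c = 1 := by rw [hc]; field_simp <;> ring
    rw [show 2*σ*c*⟪v - b, x - a⟫ = (2*σ*c)*⟪v - b, x - a⟫ by ring, h5, one_mul] at h4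
    exact h4
  · rintro ⟨a, b⟩ hab ⟨a', b'⟩ hab'
    have hmon := hG.1 (a, b) hab (a', b') hab'
    simp only at hmon ⊢
    have hexp : a + c • (v - b) - (a' + c • (v - b')) = (a - a') - c • (b - b') := by
      module
    rw [hexp, ← smul_sub c b b']
    have h2 : ‖(a - a') - c • (b - b')‖^2 ≤ ‖c • (b - b')‖^2 := by
      rw [norm_sub_sq_real, real_inner_smul_right, real_inner_comm, norm_smul]
      have : ‖a - a'‖^2 ≤ c * (2 * ⟪b - b', a - a'⟫) := by
        have h5 : σ * (2*c) = 1 := by rw [hc]; field_simp <;> ring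
        nlinarith [hmon, hcpos, hσ]
      nlinarith [this]
    nlinarith [norm_nonneg ((a - a') - c • (b - b')), norm_nonneg (c • (b - b')), h2]

lemma str_lip {σ : ℝ} (hσ : 0 < σ) {G : X → Set X} (hG : StrMono σ G)
    {x x' u u' : X} (h : u ∈ G x) (h' : u' ∈ G x') : σ * ‖x - x'‖ ≤ ‖u - u'‖ := by
  have hmon := hG (x, u) h (x', u') h'
  simp only at hmon
  have hcs : ⟪u - u', x - x'⟫ ≤ ‖u - u'‖ * ‖x - x'‖ := real_inner_le_norm _ _
  rcases eq_or_lt_of_le (norm_nonneg (x - x')) with heq | hlt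
  · rw [← heq, mul_zero]; exact norm_nonneg _
  · nlinarith [hmon, hcs, hlt]

end Aux

/-- Equivalence of local strong maximal monotonicity of types (A) and (B) with
prescribed modulus σ in a Hilbert space. -/
theorem stmt_12 (σ : ℝ) (hσ : 0 < σ) (T : X → Set X) (xbar vbar : X)
    (hx : vbar ∈ T xbar) :
    LocStrMaxBAt σ T xbar vbar ↔ LocStrMaxAAt σ T xbar vbar := by
  constructor
  · -- (B) implies (A)
    rintro ⟨U, hU, V, hV, G, hGmax, hagree⟩
    have hGs : StrMono σ G := hGmax.1
    have hxU : xbar ∈ U := mem_of_mem_nhds hU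
    have hvV : vbar ∈ V := mem_of_mem_nhds hV
    have hxvG : vbar ∈ G xbar := by
      have h1 : (xbar, vbar) ∈ gph T ∩ U ×ˢ V := ⟨hx, ⟨hxU, hvV⟩⟩
      rw [← hagree] at h1; exact h1.1
    have hGne : (gph G).Nonempty := ⟨(xbar, vbar), hxvG⟩
    obtain ⟨εU, hεU, hbU⟩ := Metric.mem_nhds_iff.mp hU
    obtain ⟨εV, hεV, hbV⟩ := Metric.mem_nhds_iff.mp hV
    set δ₂ : ℝ := min εV (σ * εU) with hδ₂
    have hδ₂pos : 0 < δ₂ := lt_min hεV (by positivity)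
    have hVsub : Metric.ball vbar δ₂ ⊆ V :=
      (Metric.ball_subset_ball (min_le_left _ _)).trans hbV
    -- a point of gph G over any u in the small ball
    have hsurj : ∀ u : X, ∃ xu, u ∈ G xu := strmax_surj hσ hGmax hGne
    choose gi hgi using hsurj
    have hgiball : ∀ u ∈ Metric.ball vbar δ₂, gi u ∈ Metric.ball xbar εU := by
      intro u hu
      have hlip := str_lip hσ hGs (hgi u) hxvG
      rw [Metric.mem_ball, dist_eq_norm] at hu ⊢
      have h2 : δ₂ ≤ σ * εU := min_le_right _ _
      nlinarith [hσ]
    refine ⟨Metric.ball xbar εU, Metric.ball_mem_nhds _ hεU,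
      Metric.ball vbar δ₂, Metric.ball_mem_nhds _ hδ₂pos, ?_, ?_⟩
    · -- strong monotonicity of T on the small window
      intro pp hpp qq hqq
      have hppG : pp ∈ gph G := by
        have h1 : pp ∈ gph T ∩ U ×ˢ V := ⟨hpp.1, ⟨hbU hpp.2.1, hVsub hpp.2.2⟩⟩
        rw [← hagree] at h1; exact h1.1
      have hqqG : qq ∈ gph G := by
        have h1 : qq ∈ gph T ∩ U ×ˢ V := ⟨hqq.1, ⟨hbU hqq.2.1, hVsub hqq.2.2⟩⟩
        rw [← hagree] at h1; exact h1.1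
      exact hGs pp hppG qq hqqG
    · -- maximality on the small window
      intro S hSmono hTS
      refine Set.Subset.antisymm ?_ hTS
      rintro ⟨x, v⟩ ⟨hvS, hxU', hvV'⟩
      have hin : ∀ u ∈ Metric.ball vbar δ₂,
          (gi u, u) ∈ gph S ∩ (Metric.ball xbar εU ×ˢ Metric.ball vbar δ₂) := by
        intro u hu
        have hball := hgiball u hu
        have hTmem : (gi u, u) ∈ gph T ∩ U ×ˢ V := by
          rw [← hagree]
          exact ⟨hgi u, ⟨hbU hball, hVsub hu⟩⟩
        exact hTS ⟨hTmem.1, ⟨hball, hu⟩⟩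
      have hmono2 : ∀ u ∈ Metric.ball vbar δ₂, 0 ≤ ⟪v - u, x - gi u⟫ := by
        intro u hu
        exact hSmono (x, v) ⟨hvS, hxU', hvV'⟩ (gi u, u) (hin u hu)
      set d : X := x - gi v with hd
      have hvball : v ∈ Metric.ball vbar δ₂ := hvV'
      have hvdist : ‖v - vbar‖ < δ₂ := by
        rw [Metric.mem_ball, dist_eq_norm] at hvball; exact hvball
      have hdzero : d = 0 := by
        by_contra hdne
        have hdpos : 0 < ‖d‖ := norm_pos_iff.mpr hdne
        set t : ℝ := min (σ/2) ((δ₂ - ‖v - vbar‖)/(2*‖d‖)) with htdef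
        have htpos : 0 < t :=
          lt_min (by positivity) (div_pos (by linarith) (by positivity))
        have htd : t * ‖d‖ ≤ (δ₂ - ‖v - vbar‖)/2 := by
          have h1 : t ≤ (δ₂ - ‖v - vbar‖)/(2*‖d‖) := min_le_right _ _
          have h2 := (le_div_iff₀ (by positivity : (0:ℝ) < 2*‖d‖)).mp h1
          nlinarith [h2]
        have hut : v + t • d ∈ Metric.ball vbar δ₂ := by
          rw [Metric.mem_ball, dist_eq_norm]
          have hrw : v + t • d - vbar = (v - vbar) + t • d := by abel
          rw [hrw]
          calc ‖(v - vbar) + t • d‖ ≤ ‖v - vbar‖ + ‖t • d‖ := norm_add_le _ _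
            _ = ‖v - vbar‖ + t * ‖d‖ := by rw [norm_smul, Real.norm_of_nonneg htpos.le]
            _ < δ₂ := by linarith
        have h1 := hmono2 (v + t • d) hut
        have h2 : ⟪d, x - gi (v + t • d)⟫ ≤ 0 := by
          have hrw : v - (v + t • d) = -(t • d) := by abel
          rw [hrw, inner_neg_left, real_inner_smul_left] at h1
          nlinarith [htpos]
        have hlipt := str_lip hσ hGs (hgi (v + t • d)) (hgi v)
        have hn : ‖v + t • d - v‖ = t * ‖d‖ := by
          rw [show v + t • d - v = t • d by abel, norm_smul, Real.norm_of_nonneg htpos.le]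
        rw [hn] at hlipt
        have h4 : ‖d‖^2 = ⟪d, x - gi (v + t • d)⟫ + ⟪d, gi (v + t • d) - gi v⟫ := by
          have hsum : ⟪d, x - gi v⟫ = ⟪d, x - gi (v + t • d)⟫ + ⟪d, gi (v + t • d) - gi v⟫ := by
            rw [← inner_add_right]
            congr 1
            abel
          rw [← hsum, hd, real_inner_self_eq_norm_sq]
        have h5 : ⟪d, gi (v + t • d) - gi v⟫ ≤ ‖d‖ * ‖gi (v + t • d) - gi v‖ :=
          real_inner_le_norm _ _
        have ht2 : t ≤ σ/2 := min_le_left _ _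
        -- σ‖Δg‖ ≤ t‖d‖ and t ≤ σ/2 give contradiction
        nlinarith [hdpos, hσ, mul_le_mul_of_nonneg_left hlipt (norm_nonneg d),
          mul_pos hdpos hdpos]
      have hxgi : x = gi v := by
        have := sub_eq_zero.mp hdzero
        exact this
      have hxvG2 : v ∈ G x := by rw [hxgi]; exact hgi v
      have hTfin : (x, v) ∈ gph T ∩ U ×ˢ V := by
        rw [← hagree]
        exact ⟨hxvG2, ⟨hbU hxU', hVsub hvV'⟩⟩
      exact ⟨hTfin.1, hxU', hvV'⟩
  · -- (A) implies (B)
    rintro ⟨U, hU, V, hV, hstr, hmax⟩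
    classical
    set M₀ : Set (X × X) := gph T ∩ U ×ˢ V with hM₀
    set 𝒮 : Set (Set (X × X)) :=
      {M | M₀ ⊆ M ∧ ∀ p ∈ M, ∀ q ∈ M, σ * ‖p.1 - q.1‖^2 ≤ ⟪p.2 - q.2, p.1 - q.1⟫} with h𝒮
    have hM₀mem : M₀ ∈ 𝒮 := ⟨Set.Subset.rfl, hstr⟩
    obtain ⟨Ms, hM₀M, hMmax⟩ := zorn_subset_nonempty 𝒮 (by
      intro c hc hchain hcne
      refine ⟨⋃₀ c, ⟨?_, ?_⟩, fun s hs => Set.subset_sUnion_of_mem hs⟩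
      · obtain ⟨M, hM⟩ := hcne
        exact (hc hM).1.trans (Set.subset_sUnion_of_mem hM)
      · rintro p hp q hq
        obtain ⟨Mp, hMp, hpMp⟩ := hp
        obtain ⟨Mq, hMq, hqMq⟩ := hq
        rcases hchain.total hMp hMq with hle | hle
        · exact (hc hMq).2 p (hle hpMp) q hqMq
        · exact (hc hMp).2 p hpMp q (hle hqMq)) M₀ hM₀mem
    set G : X → Set X := fun x => {v | (x, v) ∈ Ms} with hG
    have hgphG : gph G = Ms := rfl
    have hGs : StrMono σ G := fun p hp q hq => hMmax.1.2 p hp q hq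
    have hGmax : StrMaxMono σ G := by
      refine ⟨hGs, fun S hS hsub => ?_⟩
      have hmem : gph S ∈ 𝒮 := ⟨hM₀M.trans hsub, hS⟩
      have h1 := hMmax.2 hmem hsub
      exact Set.Subset.antisymm h1 hsub
    refine ⟨U, hU, V, hV, G, hGmax, ?_⟩
    have hGmono : MonoOn' G (U ×ˢ V) := by
      intro p hp q hq
      have := hGs p hp.1 q hq.1
      nlinarith [sq_nonneg ‖p.1 - q.1‖, hσ, this]
    have hsub2 : gph T ∩ U ×ˢ V ⊆ gph G ∩ U ×ˢ V := by
      intro p hp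
      exact ⟨hM₀M hp, hp.2⟩
    exact hmax G hGmono hsub2
end

section
/- Let X be a Hilbert space, σ > 0, and T : X ⇉ X locally strongly maximal monotone (type B) around (x̄, x̄*) with modulus σ. Then the inverse T⁻¹ has a continuous single-valued localization around (x̄*, x̄), and this localization is Lipschitz with constant 1/σ. -/
open Set Filter Topology RealInnerProductSpace

variable {X : Type*} [NormedAddCommGroup X] [InnerProductSpace ℝ X] [CompleteSpace X]

section AuxMinty
set_option linter.unusedSectionVars false


noncomputable def qf (σ : ℝ) (v0 : X) (p : X × X) (x : X) : ℝ :=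
  σ * ‖x - p.1‖ ^ 2 - ⟪v0 - p.2, x - p.1⟫

noncomputable def qgrad (σ : ℝ) (v0 : X) (p : X × X) (x : X) : X :=
  (2 * σ) • (x - p.1) - (v0 - p.2)

lemma qf_expand (σ : ℝ) (v0 : X) (p : X × X) (x d : X) (t : ℝ) :
    qf σ v0 p (x + t • d) = qf σ v0 p x + t * ⟪qgrad σ v0 p x, d⟫ + σ * t ^ 2 * ‖d‖ ^ 2 := by
  have h : x + t • d - p.1 = (x - p.1) + t • d := by abel
  simp only [qf, qgrad, h, norm_add_sq_real, inner_add_right, real_inner_smul_right,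
    inner_sub_left, real_inner_smul_left, norm_smul, Real.norm_eq_abs, mul_pow, sq_abs]
  ring

lemma qf_midpoint (σ : ℝ) (v0 : X) (p : X × X) (x y : X) :
    qf σ v0 p ((1/2 : ℝ) • (x + y)) = (qf σ v0 p x + qf σ v0 p y) / 2 - σ / 4 * ‖x - y‖ ^ 2 := by
  have key : ∀ a b u : X, σ * ‖(1/2 : ℝ) • (a + b)‖ ^ 2 - ⟪u, (1/2 : ℝ) • (a + b)⟫
      = (σ * ‖a‖ ^ 2 - ⟪u, a⟫ + (σ * ‖b‖ ^ 2 - ⟪u, b⟫)) / 2 - σ / 4 * ‖a - b‖ ^ 2 := by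
    intro a b u
    have par : ‖a + b‖ ^ 2 + ‖a - b‖ ^ 2 = 2 * ‖a‖ ^ 2 + 2 * ‖b‖ ^ 2 := by
      have h1 := norm_add_sq_real a b
      have h2 := norm_sub_sq_real a b
      linarith
    have hn : ‖(1/2 : ℝ) • (a + b)‖ ^ 2 = (1/4) * ‖a + b‖ ^ 2 := by
      rw [norm_smul, Real.norm_eq_abs, mul_pow, sq_abs]; ring
    have hi : ⟪u, (1/2 : ℝ) • (a + b)⟫ = (1/2) * (⟪u, a⟫ + ⟪u, b⟫) := by
      rw [real_inner_smul_right, inner_add_right]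
    rw [hn, hi]; linear_combination (σ/4) * par
  have h : (1/2 : ℝ) • (x + y) - p.1 = (1/2 : ℝ) • ((x - p.1) + (y - p.1)) := by
    rw [smul_add, smul_add]; module
  have hxy : x - y = (x - p.1) - (y - p.1) := by abel
  simp only [qf, h]
  rw [hxy]; exact key _ _ _

lemma qf_continuous (σ : ℝ) (v0 : X) (p : X × X) : Continuous (qf σ v0 p) := by
  unfold qf
  exact (continuous_const.mul (((continuous_id.sub continuous_const).norm).pow 2)).sub
    (continuous_const.inner (continuous_id.sub continuous_const))

lemma continuous_finset_sup' {ι : Type*} {A : Finset ι} (hne : A.Nonempty) {f : ι → X → ℝ}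
    (hf : ∀ i ∈ A, Continuous (f i)) : Continuous fun x => A.sup' hne fun i => f i x := by
  rw [continuous_iff_continuousAt]
  intro x
  exact Filter.Tendsto.finset_sup'_nhds_apply hne (fun i hi => ((hf i hi).tendsto x))

lemma exists_min_of_strongconvex {F : X → ℝ} {c : ℝ} (hc : 0 < c) (hF : Continuous F)
    (hconv : ∀ x y : X, F ((1/2 : ℝ) • (x + y)) ≤ (F x + F y) / 2 - c * ‖x - y‖ ^ 2)
    (hbdd : BddBelow (Set.range F)) : ∃ x : X, ∀ y, F x ≤ F y := by
  set m := sInf (Set.range F) with hm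
  have hne : (Set.range F).Nonempty := ⟨F 0, 0, rfl⟩
  have hmle : ∀ y, m ≤ F y := fun y => csInf_le hbdd ⟨y, rfl⟩
  have hex : ∀ n : ℕ, ∃ x : X, F x < m + 1 / (n + 1) := by
    intro n
    have h1 : m < m + 1 / (n + 1 : ℝ) := by
      have : (0:ℝ) < 1 / (n + 1 : ℝ) := by positivity
      linarith
    obtain ⟨_, ⟨x, rfl⟩, hx⟩ := exists_lt_of_csInf_lt hne h1
    exact ⟨x, hx⟩
  choose x hx using hex
  -- pairwise distance bound
  have hdist : ∀ n k : ℕ, c * ‖x n - x k‖ ^ 2 ≤ 1 / (n + 1) / 2 + 1 / (k + 1) / 2 := by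
    intro n k
    have h1 := hconv (x n) (x k)
    have h2 := hmle ((1/2 : ℝ) • (x n + x k))
    have h3 := hx n
    have h4 := hx k
    linarith
  have hcauchy : CauchySeq x := by
    rw [Metric.cauchySeq_iff]
    intro ε hε
    obtain ⟨N, hN⟩ := exists_nat_gt (1 / (c * ε ^ 2))
    refine ⟨N, fun n hn k hk => ?_⟩
    have hNpos : (0:ℝ) < N + 1 := by positivity
    have h5 : 1 / (c * ε ^ 2) < N + 1 := by linarith
    have h6 : 1 / ((N:ℝ) + 1) < c * ε ^ 2 := by
      rw [div_lt_iff₀ hNpos]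
      have hcε : (0:ℝ) < c * ε ^ 2 := by positivity
      calc (1:ℝ) = (1 / (c * ε ^ 2)) * (c * ε ^ 2) := by field_simp
        _ < (N + 1) * (c * ε ^ 2) := by
            apply mul_lt_mul_of_pos_right _ hcε; linarith
        _ = c * ε ^ 2 * (N + 1) := by ring
    have hn1 : 1 / ((n:ℝ) + 1) ≤ 1 / ((N:ℝ) + 1) := by
      apply one_div_le_one_div_of_le hNpos
      exact_mod_cast by omega
    have hk1 : 1 / ((k:ℝ) + 1) ≤ 1 / ((N:ℝ) + 1) := by
      apply one_div_le_one_div_of_le hNpos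
      exact_mod_cast by omega
    have h7 := hdist n k
    have h8 : c * ‖x n - x k‖ ^ 2 < c * ε ^ 2 := by linarith
    have h9 : ‖x n - x k‖ ^ 2 < ε ^ 2 := by
      have := (mul_lt_mul_iff_right₀ hc).mp h8
      exact this
    rw [dist_eq_norm]
    exact lt_of_pow_lt_pow_left₀ 2 hε.le h9
  obtain ⟨z, hz⟩ := cauchySeq_tendsto_of_complete hcauchy
  refine ⟨z, fun y => ?_⟩
  have hFz : Tendsto (fun n => F (x n)) atTop (𝓝 (F z)) := (hF.continuousAt.tendsto).comp hz
  have hup : Tendsto (fun n : ℕ => m + 1 / (n + 1 : ℝ)) atTop (𝓝 m) := by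
    have := tendsto_one_div_add_atTop_nhds_zero_nat (𝕜 := ℝ)
    simpa using tendsto_const_nhds.add this
  have hFzm : F z ≤ m := le_of_tendsto_of_tendsto' hFz hup (fun n => (hx n).le)
  exact hFzm.trans (hmle y)

lemma key_ineq (σ : ℝ) (hσ : 0 < σ) (v0 x : X) (P : Finset (X × X)) (lam : X × X → ℝ)
    (h0 : ∀ p ∈ P, 0 ≤ lam p) (h1 : ∑ p ∈ P, lam p = 1)
    (hmono : ∀ p ∈ P, ∀ q ∈ P, σ * ‖p.1 - q.1‖ ^ 2 ≤ ⟪p.2 - q.2, p.1 - q.1⟫)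
    (hg : ∑ p ∈ P, lam p • qgrad σ v0 p x = 0) :
    ∑ p ∈ P, lam p * qf σ v0 p x ≤ 0 := by
  classical
  set s : X × X → X := fun p => x - p.1 with hs
  set u : X × X → X := fun p => v0 - p.2 with hu
  set S : X := ∑ p ∈ P, lam p • s p with hS
  set U : X := ∑ p ∈ P, lam p • u p with hU
  -- U = (2σ) S
  have hUS : U = (2 * σ) • S := by
    have : ∑ p ∈ P, lam p • qgrad σ v0 p x
        = (2 * σ) • S - U := by
      rw [hS, hU, Finset.smul_sum, ← Finset.sum_sub_distrib]
      apply Finset.sum_congr rfl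
      intro p hp
      simp only [qgrad, hs, hu, smul_sub, smul_smul]
      module
    rw [hg] at this
    exact (sub_eq_zero.mp this.symm).symm
  -- helper sums
  have sum_inner_S : ∀ w : X, ∑ q ∈ P, lam q * ⟪w, s q⟫ = ⟪w, S⟫ := by
    intro w
    rw [hS, inner_sum]
    exact Finset.sum_congr rfl fun q hq => (real_inner_smul_right _ _ _).symm
  have sum_inner_U : ∀ w : X, ∑ q ∈ P, lam q * ⟪u q, w⟫ = ⟪U, w⟫ := by
    intro w
    rw [hU, sum_inner]
    exact Finset.sum_congr rfl fun q hq => (real_inner_smul_left _ _ _).symm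
  have sum_inner_S' : ∀ w : X, ∑ q ∈ P, lam q * ⟪s q, w⟫ = ⟪S, w⟫ := by
    intro w
    rw [hS, sum_inner]
    exact Finset.sum_congr rfl fun q hq => (real_inner_smul_left _ _ _).symm
  set T1 : ℝ := ∑ p ∈ P, lam p * ⟪u p, s p⟫ with hT1
  set T2 : ℝ := ∑ p ∈ P, lam p * ‖s p‖ ^ 2 with hT2
  -- the double sum is nonpositive
  have hdouble : ∑ p ∈ P, ∑ q ∈ P, lam p * lam q *
      (σ * ‖s p - s q‖ ^ 2 - ⟪u p - u q, s p - s q⟫) ≤ 0 := by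
    apply Finset.sum_nonpos
    intro p hp
    apply Finset.sum_nonpos
    intro q hq
    have e1 : s p - s q = q.1 - p.1 := by simp only [hs]; abel
    have e2 : u p - u q = q.2 - p.2 := by simp only [hu]; abel
    have := hmono q hq p hp
    apply mul_nonpos_of_nonneg_of_nonpos (mul_nonneg (h0 p hp) (h0 q hq))
    rw [e1, e2]
    linarith
  -- expand the double sum
  have hexpand : ∑ p ∈ P, ∑ q ∈ P, lam p * lam q *
      (σ * ‖s p - s q‖ ^ 2 - ⟪u p - u q, s p - s q⟫)
      = 2 * σ * (T2 - ‖S‖ ^ 2) - 2 * (T1 - ⟪U, S⟫) := by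
    have hq : ∀ p ∈ P, ∑ q ∈ P, lam p * lam q *
        (σ * ‖s p - s q‖ ^ 2 - ⟪u p - u q, s p - s q⟫)
        = lam p * (σ * T2 + σ * ‖s p‖ ^ 2 - 2 * σ * ⟪s p, S⟫ - T1 + ⟪u p, S⟫ + ⟪U, s p⟫
            - ⟪u p, s p⟫) := by
      intro p hp
      have expand : ∀ q ∈ P, lam p * lam q * (σ * ‖s p - s q‖ ^ 2 - ⟪u p - u q, s p - s q⟫)
          = lam p * (σ * (lam q * ‖s q‖ ^ 2) + σ * ‖s p‖ ^ 2 * lam q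
              - 2 * σ * (lam q * ⟪s p, s q⟫) - lam q * ⟪u q, s q⟫ + lam q * ⟪u p, s q⟫
              + lam q * ⟪u q, s p⟫ - lam q * ⟪u p, s p⟫) := by
        intro q _
        have h1 : ‖s p - s q‖ ^ 2 = ‖s p‖ ^ 2 - 2 * ⟪s p, s q⟫ + ‖s q‖ ^ 2 :=
          norm_sub_sq_real _ _
        have h2 : ⟪u p - u q, s p - s q⟫
            = ⟪u p, s p⟫ - ⟪u p, s q⟫ - ⟪u q, s p⟫ + ⟪u q, s q⟫ := by
          simp only [inner_sub_left, inner_sub_right]; ring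
        rw [h1, h2]; ring
      rw [Finset.sum_congr rfl expand, ← Finset.mul_sum]
      congr 1
      simp only [Finset.sum_add_distrib, Finset.sum_sub_distrib, ← Finset.mul_sum,
        ← Finset.sum_mul]
      rw [← hT2, sum_inner_S (s p), sum_inner_S (u p), sum_inner_U (s p), ← hT1, h1]
      ring
    rw [Finset.sum_congr rfl hq]
    have expand2 : ∀ p ∈ P, lam p * (σ * T2 + σ * ‖s p‖ ^ 2 - 2 * σ * ⟪s p, S⟫ - T1
          + ⟪u p, S⟫ + ⟪U, s p⟫ - ⟪u p, s p⟫)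
        = lam p * σ * T2 + σ * (lam p * ‖s p‖ ^ 2) - 2 * σ * (lam p * ⟪s p, S⟫)
          - lam p * T1 + lam p * ⟪u p, S⟫ + lam p * ⟪U, s p⟫ - lam p * ⟪u p, s p⟫ := by
      intro p _; ring
    rw [Finset.sum_congr rfl expand2]
    simp only [Finset.sum_add_distrib, Finset.sum_sub_distrib, ← Finset.mul_sum,
      ← Finset.sum_mul]
    rw [← hT2, sum_inner_S' S, sum_inner_U S, sum_inner_S U, ← hT1, h1]
    rw [real_inner_self_eq_norm_sq]
    ring
  have hfin : 2 * σ * (T2 - ‖S‖ ^ 2) - 2 * (T1 - ⟪U, S⟫) ≤ 0 := hexpand ▸ hdouble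
  have hUSin : ⟪U, S⟫ = 2 * σ * ‖S‖ ^ 2 := by
    rw [hUS, real_inner_smul_left, real_inner_self_eq_norm_sq]
  have hgoal : ∑ p ∈ P, lam p * qf σ v0 p x = σ * T2 - T1 := by
    rw [hT1, hT2, Finset.mul_sum, ← Finset.sum_sub_distrib]
    apply Finset.sum_congr rfl
    intro p hp
    simp only [qf]; ring
  rw [hgoal]
  have hS2 : (0:ℝ) ≤ ‖S‖ ^ 2 := by positivity
  nlinarith [hfin, hUSin]

lemma finite_step (σ : ℝ) (hσ : 0 < σ) (v0 : X) (A : Finset (X × X))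
    (hA : ∀ p ∈ A, ∀ q ∈ A, σ * ‖p.1 - q.1‖ ^ 2 ≤ ⟪p.2 - q.2, p.1 - q.1⟫) :
    ∃ x : X, ∀ p ∈ A, qf σ v0 p x ≤ 0 := by
  classical
  rcases A.eq_empty_or_nonempty with rfl | hne
  · exact ⟨0, by simp⟩
  obtain ⟨p0, hp0⟩ := hne
  have hneA : A.Nonempty := ⟨p0, hp0⟩
  set F : X → ℝ := fun x => A.sup' hneA fun p => qf σ v0 p x with hFdef
  have hFc : Continuous F := continuous_finset_sup' hneA fun p _ => qf_continuous σ v0 p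
  have hFle : ∀ x, ∀ p ∈ A, qf σ v0 p x ≤ F x := fun x p hp =>
    Finset.le_sup' (fun q => qf σ v0 q x) hp
  have hmid : ∀ x y : X, F ((1/2:ℝ) • (x + y)) ≤ (F x + F y)/2 - (σ/4) * ‖x - y‖^2 := by
    intro x y
    apply Finset.sup'_le
    intro p hp
    rw [qf_midpoint]
    have h1 := hFle x p hp
    have h2 := hFle y p hp
    linarith
  have hbdd : BddBelow (Set.range F) := by
    refine ⟨-(‖v0 - p0.2‖^2) / (4*σ), ?_⟩
    rintro _ ⟨x, rfl⟩
    have h1 := hFle x p0 hp0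
    have h2 : ⟪v0 - p0.2, x - p0.1⟫ ≤ ‖v0 - p0.2‖ * ‖x - p0.1‖ := real_inner_le_norm _ _
    have h3 : (0:ℝ) ≤ ‖x - p0.1‖ := norm_nonneg _
    have h4 : (0:ℝ) ≤ ‖v0 - p0.2‖ := norm_nonneg _
    simp only [qf] at h1
    rw [div_le_iff₀ (by positivity : (0:ℝ) < 4*σ)]
    nlinarith [sq_nonneg (2*σ*‖x - p0.1‖ - ‖v0 - p0.2‖)]
  obtain ⟨xs, hxs⟩ := exists_min_of_strongconvex (c := σ/4) (by positivity) hFc hmid hbdd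
  suffices hF0 : F xs ≤ 0 by
    exact ⟨xs, fun p hp => le_trans (hFle xs p hp) hF0⟩
  set A' : Finset (X × X) := A.filter (fun p => F xs ≤ qf σ v0 p xs) with hA'
  have hA'sub : A' ⊆ A := Finset.filter_subset _ _
  have hA'eq : ∀ p ∈ A', qf σ v0 p xs = F xs := fun p hp =>
    le_antisymm (hFle xs p (hA'sub hp)) (Finset.mem_filter.mp hp).2
  have hA'ne : A'.Nonempty := by
    obtain ⟨p, hpA, hpeq⟩ := Finset.exists_mem_eq_sup' hneA (fun p => qf σ v0 p xs)
    refine ⟨p, Finset.mem_filter.mpr ⟨hpA, ?_⟩⟩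
    show F xs ≤ qf σ v0 p xs
    rw [hFdef]
    exact hpeq.le
  set Gs : Finset X := A'.image (fun p => qgrad σ v0 p xs) with hGs
  have hGsne : Gs.Nonempty := hA'ne.image _
  have hhull : (0 : X) ∈ convexHull ℝ (Gs : Set X) := by
    by_contra h0
    set K : Set X := convexHull ℝ (Gs : Set X) with hK
    obtain ⟨g0, hg0⟩ := hGsne
    have hKne : K.Nonempty := ⟨g0, subset_convexHull ℝ _ hg0⟩
    have hKcompact : IsCompact K := Gs.finite_toSet.isCompact_convexHull ℝ
    have hKconv : Convex ℝ K := convex_convexHull _ _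
    obtain ⟨ds, hdsK, hds⟩ :=
      exists_norm_eq_iInf_of_complete_convex hKne hKcompact.isClosed.isComplete hKconv 0
    have hmin := (norm_eq_iInf_iff_real_inner_le_zero hKconv hdsK).mp hds
    have hds0 : ds ≠ 0 := fun h => h0 (h ▸ hdsK)
    have hc : 0 < ‖ds‖^2 := by
      have := norm_pos_iff.mpr hds0
      positivity
    set d : X := -ds with hd
    have hdnorm : ‖d‖ = ‖ds‖ := norm_neg ds
    have hgd : ∀ p ∈ A', ⟪qgrad σ v0 p xs, d⟫ ≤ -‖ds‖^2 := by
      intro p hp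
      have hmem : qgrad σ v0 p xs ∈ K :=
        subset_convexHull ℝ _ (Finset.mem_coe.mpr (Finset.mem_image_of_mem _ hp))
      have h1 := hmin _ hmem
      have hexp : ⟪(0:X) - ds, qgrad σ v0 p xs - ds⟫
          = -⟪ds, qgrad σ v0 p xs⟫ + ‖ds‖^2 := by
        simp only [zero_sub, inner_neg_left, inner_sub_right, real_inner_self_eq_norm_sq]
        ring
      rw [hexp] at h1
      have : ⟪qgrad σ v0 p xs, d⟫ = -⟪ds, qgrad σ v0 p xs⟫ := by
        rw [hd, inner_neg_right, real_inner_comm]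
      rw [this]
      linarith
    set eps : X × X → ℝ := fun p =>
      if F xs ≤ qf σ v0 p xs then ‖ds‖^2/(σ*‖ds‖^2+1)
      else min 1 ((F xs - qf σ v0 p xs)/(|⟪qgrad σ v0 p xs, d⟫| + σ*‖ds‖^2 + 1)) with heps
    have hepspos : ∀ p ∈ A, 0 < eps p := by
      intro p hp
      simp only [heps]
      split_ifs with hcase
      · positivity
      · apply lt_min one_pos
        apply div_pos
        · have := hFle xs p hp
          push_neg at hcase
          linarith
        · positivity
    set t : ℝ := (A.inf' hneA eps)/2 with ht
    have htpos : 0 < t := by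
      have h0 : 0 < A.inf' hneA eps := by
        rw [Finset.lt_inf'_iff]
        exact hepspos
      simp only [ht]; linarith
    have hinfpos : 0 < A.inf' hneA eps := by
      rw [Finset.lt_inf'_iff]
      exact hepspos
    have htlt : ∀ p ∈ A, t < eps p := by
      intro p hp
      have h1 := Finset.inf'_le eps hp
      simp only [ht]
      linarith
    have hFt : F (xs + t • d) < F xs := by
      have : ∀ p ∈ A, qf σ v0 p (xs + t • d) < F xs := by
        intro p hp
        rw [qf_expand]
        have hte := htlt p hp
        by_cases hcase : F xs ≤ qf σ v0 p xs
        · have hact : qf σ v0 p xs = F xs :=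
            le_antisymm (hFle xs p hp) hcase
          have hgdp := hgd p (Finset.mem_filter.mpr ⟨hp, hcase⟩)
          rw [heps] at hte
          simp only [if_pos hcase] at hte
          have hden : (0:ℝ) < σ*‖ds‖^2+1 := by positivity
          rw [lt_div_iff₀ hden] at hte
          -- t*(σ‖ds‖²+1) < ‖ds‖²
          rw [hact, hdnorm]
          nlinarith [mul_le_mul_of_nonneg_left hgdp htpos.le,
            mul_lt_mul_of_pos_left hte htpos, sq_nonneg t]
        · have hlt : qf σ v0 p xs < F xs := lt_of_le_of_ne (hFle xs p hp)
            (fun h => hcase h.ge)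
          rw [heps] at hte
          simp only [if_neg hcase] at hte
          have ht1 : t < 1 := lt_of_lt_of_le hte (min_le_left _ _)
          have hden : (0:ℝ) < |⟪qgrad σ v0 p xs, d⟫| + σ*‖ds‖^2 + 1 := by positivity
          have hte2 : t < (F xs - qf σ v0 p xs)/(|⟪qgrad σ v0 p xs, d⟫| + σ*‖ds‖^2 + 1) :=
            lt_of_lt_of_le hte (min_le_right _ _)
          rw [lt_div_iff₀ hden] at hte2
          have habs : ⟪qgrad σ v0 p xs, d⟫ ≤ |⟪qgrad σ v0 p xs, d⟫| := le_abs_self _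
          have habs0 : (0:ℝ) ≤ |⟪qgrad σ v0 p xs, d⟫| := abs_nonneg _
          rw [hdnorm]
          nlinarith [mul_le_mul_of_nonneg_left habs htpos.le,
            mul_lt_mul_of_pos_left ht1 htpos, sq_nonneg ‖ds‖, norm_nonneg ds,
            mul_le_mul_of_nonneg_right ht1.le (mul_nonneg htpos.le (mul_nonneg hσ.le (sq_nonneg ‖ds‖)))]
      exact (Finset.sup'_lt_iff hneA).mpr this
    exact absurd (hxs (xs + t • d)) (not_le.mpr hFt)
  rw [Finset.mem_convexHull'] at hhull
  obtain ⟨w, hw0, hw1, hwsum⟩ := hhull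
  have hsec' : ∀ y : X, ∃ p : X × X, y ∈ Gs → (p ∈ A' ∧ qgrad σ v0 p xs = y) := by
    intro y
    by_cases hy : y ∈ Gs
    · obtain ⟨p, hp, hpy⟩ := Finset.mem_image.mp hy
      exact ⟨p, fun _ => ⟨hp, hpy⟩⟩
    · exact ⟨p0, fun h => absurd h hy⟩
  choose sec hsec using hsec'
  set P : Finset (X × X) := Gs.image sec with hP
  set lam : X × X → ℝ := fun p => w (qgrad σ v0 p xs) with hlam
  have hinj : ∀ y1 ∈ Gs, ∀ y2 ∈ Gs, sec y1 = sec y2 → y1 = y2 := by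
    intro y1 h1 y2 h2 he
    rw [← (hsec y1 h1).2, ← (hsec y2 h2).2, he]
  have hsum1 : ∑ p ∈ P, lam p = 1 := by
    rw [hP, Finset.sum_image hinj, ← hw1]
    exact Finset.sum_congr rfl fun y hy => by simp only [hlam]; rw [(hsec y hy).2]
  have hsumg : ∑ p ∈ P, lam p • qgrad σ v0 p xs = 0 := by
    rw [hP, Finset.sum_image hinj, ← hwsum]
    exact Finset.sum_congr rfl fun y hy => by simp only [hlam]; rw [(hsec y hy).2]
  have hPA : ∀ p ∈ P, p ∈ A' := by
    intro p hp
    obtain ⟨y, hy, rfl⟩ := Finset.mem_image.mp hp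
    exact (hsec y hy).1
  have hlam0 : ∀ p ∈ P, 0 ≤ lam p := by
    intro p hp
    obtain ⟨y, hy, rfl⟩ := Finset.mem_image.mp hp
    simp only [hlam]; rw [(hsec y hy).2]; exact hw0 y hy
  have hmono' : ∀ p ∈ P, ∀ q ∈ P, σ * ‖p.1-q.1‖^2 ≤ ⟪p.2-q.2,p.1-q.1⟫ :=
    fun p hp q hq => hA p (hA'sub (hPA p hp)) q (hA'sub (hPA q hq))
  have hki := key_ineq σ hσ v0 xs P lam hlam0 hsum1 hmono' hsumg
  have hFeq : ∑ p ∈ P, lam p * qf σ v0 p xs = F xs := by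
    calc ∑ p ∈ P, lam p * qf σ v0 p xs = ∑ p ∈ P, lam p * F xs :=
          Finset.sum_congr rfl fun p hp => by rw [hA'eq p (hPA p hp)]
      _ = (∑ p ∈ P, lam p) * F xs := by rw [Finset.sum_mul]
      _ = F xs := by rw [hsum1, one_mul]
  linarith [hki, hFeq.ge]

lemma Cball (σ : ℝ) (hσ : 0 < σ) (v0 : X) (p : X × X) :
    {x : X | qf σ v0 p x ≤ 0}
      = Metric.closedBall (p.1 + (2*σ)⁻¹ • (v0 - p.2)) ‖(2*σ)⁻¹ • (v0 - p.2)‖ := by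
  ext x
  set a : X := (2*σ)⁻¹ • (v0 - p.2) with ha
  simp only [Set.mem_setOf_eq, Metric.mem_closedBall, dist_eq_norm]
  have hre : x - (p.1 + a) = (x - p.1) - a := by abel
  rw [hre]
  have h2σ : (2*σ) * (2*σ)⁻¹ = 1 := mul_inv_cancel₀ (by positivity)
  have hiq : ⟪x - p.1, a⟫ = (2*σ)⁻¹ * ⟪v0 - p.2, x - p.1⟫ := by
    rw [ha, real_inner_smul_right, real_inner_comm]
  have hβpos : (0:ℝ) < (2*σ)⁻¹ := by positivity
  have hσβ : (2*σ)⁻¹ * σ = 1/2 := by field_simp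
  have hsq : qf σ v0 p x ≤ 0 ↔ ‖(x - p.1) - a‖^2 ≤ ‖a‖^2 := by
    rw [norm_sub_sq_real, hiq]
    simp only [qf]
    constructor
    · intro h
      have h3 : (2*σ)⁻¹ * (σ * ‖x - p.1‖^2) ≤ (2*σ)⁻¹ * ⟪v0 - p.2, x - p.1⟫ :=
        mul_le_mul_of_nonneg_left (by linarith) hβpos.le
      have h4 : (2*σ)⁻¹ * (σ * ‖x - p.1‖^2) = (1/2) * ‖x - p.1‖^2 := by
        rw [← mul_assoc, hσβ]
      linarith
    · intro h
      have h3 : σ * ‖x - p.1‖^2 ≤ σ * (2*((2*σ)⁻¹ * ⟪v0 - p.2, x - p.1⟫)) :=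
        mul_le_mul_of_nonneg_left (by linarith) hσ.le
      have h4 : σ * (2*((2*σ)⁻¹ * ⟪v0 - p.2, x - p.1⟫))
          = (2*σ*(2*σ)⁻¹) * ⟪v0 - p.2, x - p.1⟫ := by ring
      rw [h4, h2σ, one_mul] at h3
      linarith
  rw [hsq]
  constructor
  · intro h
    exact le_of_pow_le_pow_left₀ two_ne_zero (norm_nonneg a) h
  · intro h
    exact pow_le_pow_left₀ (norm_nonneg _) h 2

lemma strmono_intersection (σ : ℝ) (hσ : 0 < σ) (G : X → Set X) (hG : StrMono σ G)
    (p0 : X × X) (hp0 : p0 ∈ gph G) (v0 : X) :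
    ∃ x0 : X, ∀ p ∈ gph G, qf σ v0 p x0 ≤ 0 := by
  classical
  set C : X × X → Set X := fun p => {x : X | qf σ v0 p x ≤ 0} with hC
  have hCclosed : ∀ p, IsClosed (C p) :=
    fun p => isClosed_le (qf_continuous σ v0 p) continuous_const
  have hCconv : ∀ p, Convex ℝ (C p) := by
    intro p
    have : C p = Metric.closedBall (p.1 + (2*σ)⁻¹ • (v0 - p.2)) ‖(2*σ)⁻¹ • (v0 - p.2)‖ :=
      Cball σ hσ v0 p
    rw [this]
    exact convex_closedBall _ _
  set K : Finset (X × X) → Set X := fun A => ⋂ p ∈ A, C p with hK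
  have hKsub : ∀ A B : Finset (X × X), A ⊆ B → K B ⊆ K A := by
    intro A B hAB
    apply Set.biInter_mono hAB
    intro p _
    exact Set.Subset.rfl
  have hKC : ∀ (A : Finset (X × X)), ∀ p ∈ A, K A ⊆ C p := by
    intro A p hp
    exact Set.biInter_subset_of_mem hp
  have hKclosed : ∀ A, IsClosed (K A) :=
    fun A => isClosed_biInter (fun p _ => hCclosed p)
  have hKconv : ∀ A, Convex ℝ (K A) :=
    fun A => convex_iInter (fun p => convex_iInter (fun _ => hCconv p))
  have hKne : ∀ A : Finset (X × X), ↑A ⊆ gph G → (K A).Nonempty := by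
    intro A hsub
    obtain ⟨x, hx⟩ := finite_step σ hσ v0 A
      (fun p hp q hq => hG p (hsub hp) q (hsub hq))
    exact ⟨x, Set.mem_iInter₂.mpr hx⟩
  have hproj' : ∀ A : Finset (X × X), ∃ v : X, ↑A ⊆ gph G →
      (v ∈ K A ∧ ∀ w ∈ K A, ‖v‖ ≤ ‖w‖) := by
    intro A
    by_cases h : ↑A ⊆ gph G
    · obtain ⟨v, hvK, hv⟩ := exists_norm_eq_iInf_of_complete_convex (hKne A h)
        (hKclosed A).isComplete (hKconv A) 0
      refine ⟨v, fun _ => ⟨hvK, fun w hw => ?_⟩⟩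
      have h1 : ‖(0:X) - v‖ ≤ ‖(0:X) - w‖ := by
        rw [hv]
        exact ciInf_le ⟨0, Set.forall_mem_range.2 fun _ => norm_nonneg _⟩
          (⟨w, hw⟩ : K A)
      simpa using h1
    · exact ⟨0, fun hh => absurd hh h⟩
  choose proj hprojspec using hproj'
  have hpar : ∀ A B : Finset (X × X), ↑A ⊆ gph G → ↑B ⊆ gph G → A ⊆ B →
      ‖proj A - proj B‖^2 ≤ 2*‖proj B‖^2 - 2*‖proj A‖^2 := by
    intro A B hAs hBs hAB
    obtain ⟨hAK, hAmin⟩ := hprojspec A hAs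
    obtain ⟨hBK, hBmin⟩ := hprojspec B hBs
    have hBinA : proj B ∈ K A := hKsub A B hAB hBK
    have hmidK : (1/2:ℝ) • proj A + (1/2:ℝ) • proj B ∈ K A :=
      (hKconv A) hAK hBinA (by norm_num) (by norm_num) (by norm_num)
    have hmin := hAmin _ hmidK
    have hmid2 : (1/2:ℝ) • proj A + (1/2:ℝ) • proj B = (1/2:ℝ) • (proj A + proj B) := by
      rw [smul_add]
    rw [hmid2] at hmin
    have hnq : ‖(1/2:ℝ) • (proj A + proj B)‖ = (1/2) * ‖proj A + proj B‖ := by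
      rw [norm_smul, Real.norm_eq_abs]
      norm_num
    rw [hnq] at hmin
    have hplaw := parallelogram_law_with_norm ℝ (proj A) (proj B)
    have hna := norm_nonneg (proj A)
    have hnab := norm_nonneg (proj A + proj B)
    simp only [pow_two]
    nlinarith [hplaw, hmin, hna, hnab]
  -- the good family and the sup
  set good : Set (Finset (X × X)) := {A | ↑A ⊆ gph G ∧ p0 ∈ A} with hgood
  have hgood0 : ({p0} : Finset (X × X)) ∈ good := by
    constructor
    · intro q hq
      simp only [Finset.coe_singleton, Set.mem_singleton_iff] at hq
      rw [hq]; exact hp0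
    · exact Finset.mem_singleton_self p0
  set c0 : X := p0.1 + (2*σ)⁻¹ • (v0 - p0.2) with hc0
  set r0 : ℝ := ‖(2*σ)⁻¹ • (v0 - p0.2)‖ with hr0
  set Rb : ℝ := ‖c0‖ + r0 with hRb
  have hRb0 : 0 ≤ Rb := by positivity
  have hbound : ∀ A ∈ good, ‖proj A‖ ≤ Rb := by
    rintro A ⟨hAs, hp0A⟩
    obtain ⟨hAK, _⟩ := hprojspec A hAs
    have h1 : proj A ∈ C p0 := hKC A p0 hp0A hAK
    have h2 : proj A ∈ Metric.closedBall c0 r0 := by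
      have h1' : proj A ∈ {x : X | qf σ v0 p0 x ≤ 0} := h1
      rwa [Cball σ hσ v0 p0] at h1'
    rw [Metric.mem_closedBall, dist_eq_norm] at h2
    calc ‖proj A‖ = ‖(proj A - c0) + c0‖ := by rw [sub_add_cancel]
      _ ≤ ‖proj A - c0‖ + ‖c0‖ := norm_add_le _ _
      _ ≤ r0 + ‖c0‖ := by linarith
      _ = Rb := by rw [hRb]; ring
  set sv : ℝ := sSup ((fun A => ‖proj A‖) '' good) with hsv
  have himgne : ((fun A => ‖proj A‖) '' good).Nonempty := ⟨_, Set.mem_image_of_mem _ hgood0⟩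
  have himgbdd : BddAbove ((fun A => ‖proj A‖) '' good) := by
    refine ⟨Rb, ?_⟩
    rintro _ ⟨A, hA, rfl⟩
    exact hbound A hA
  have hsvle : ∀ A ∈ good, ‖proj A‖ ≤ sv := fun A hA =>
    le_csSup himgbdd (Set.mem_image_of_mem _ hA)
  have hsvRb : sv ≤ Rb := csSup_le himgne (by rintro _ ⟨A, hA, rfl⟩; exact hbound A hA)
  have hsv0 : 0 ≤ sv := le_trans (norm_nonneg _) (hsvle _ hgood0)
  -- approximating sequence
  have hexA : ∀ n : ℕ, ∃ A ∈ good, sv - 1/(n+1) < ‖proj A‖ := by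
    intro n
    have h1 : sv - 1/(n+1 : ℝ) < sv := by
      have : (0:ℝ) < 1/(n+1 : ℝ) := by positivity
      linarith
    obtain ⟨_, ⟨A, hA, rfl⟩, h2⟩ := exists_lt_of_lt_csSup himgne h1
    exact ⟨A, hA, h2⟩
  choose Aseq hAgood hAlow using hexA
  -- nested sequence
  set Bseq : ℕ → Finset (X × X) := fun n => Nat.rec (Aseq 0) (fun k Bk => Bk ∪ Aseq (k+1)) n
    with hBseq
  have hBsucc : ∀ n, Bseq (n+1) = Bseq n ∪ Aseq (n+1) := fun n => rfl
  have hBgood : ∀ n, Bseq n ∈ good := by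
    intro n
    induction n with
    | zero => exact hAgood 0
    | succ k ih =>
      rw [hBsucc]
      constructor
      · rw [Finset.coe_union]
        exact Set.union_subset ih.1 (hAgood (k+1)).1
      · exact Finset.mem_union_left _ ih.2
  have hABn : ∀ n, Aseq n ⊆ Bseq n := by
    intro n
    cases n with
    | zero => exact Finset.Subset.refl _
    | succ k => rw [hBsucc]; exact Finset.subset_union_right
  have hBmono : ∀ n m, n ≤ m → Bseq n ⊆ Bseq m := by
    intro n m hnm
    induction m with
    | zero => simp only [Nat.le_zero] at hnm; rw [hnm]
    | succ k ih =>
      rcases Nat.lt_or_ge n (k+1) with h | h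
      · have := ih (Nat.lt_succ_iff.mp h)
        rw [hBsucc]
        exact this.trans Finset.subset_union_left
      · have : n = k + 1 := le_antisymm hnm h
        rw [this]
  -- min-norm monotonicity
  have hprojmono : ∀ A B : Finset (X × X), A ∈ good → B ∈ good → A ⊆ B →
      ‖proj A‖ ≤ ‖proj B‖ := by
    intro A B hA hB hAB
    obtain ⟨hAK, hAmin⟩ := hprojspec A hA.1
    obtain ⟨hBK, _⟩ := hprojspec B hB.1
    exact hAmin _ (hKsub A B hAB hBK)
  have hBlow : ∀ n, sv - 1/(n+1) < ‖proj (Bseq n)‖ := fun n =>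
    lt_of_lt_of_le (hAlow n) (hprojmono _ _ (hAgood n) (hBgood n) (hABn n))
  -- the Cauchy-type bound
  have hkey : ∀ n : ℕ, ∀ B : Finset (X × X), B ∈ good → Bseq n ⊆ B →
      ‖proj (Bseq n) - proj B‖^2 ≤ 4*(Rb+1)/(n+1) := by
    intro n B hB hsubB
    have h1 := hpar (Bseq n) B (hBgood n).1 hB.1 hsubB
    have h2 := hsvle B hB
    have h3 := hBlow n
    have h4 := hsvle _ (hBgood n)
    have h5 : (0:ℝ) < 1/(n+1 : ℝ) := by positivity
    have hn1 : ‖proj B‖^2 - ‖proj (Bseq n)‖^2 ≤ 2*(Rb+1)/(n+1) := by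
      have ha := norm_nonneg (proj (Bseq n))
      have hb := norm_nonneg (proj B)
      have h6 : ‖proj B‖^2 ≤ sv^2 := by nlinarith
      have h7 : sv^2 - ‖proj (Bseq n)‖^2 ≤ (sv - ‖proj (Bseq n)‖) * (sv + ‖proj (Bseq n)‖) := by
        ring_nf; nlinarith [sq_nonneg sv]
      have h8 : sv - ‖proj (Bseq n)‖ < 1/(n+1) := by linarith
      have h9 : sv + ‖proj (Bseq n)‖ ≤ 2*(Rb+1) := by linarith
      have h10 : 0 ≤ sv - ‖proj (Bseq n)‖ := by linarith
      calc ‖proj B‖^2 - ‖proj (Bseq n)‖^2 ≤ sv^2 - ‖proj (Bseq n)‖^2 := by linarith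
        _ ≤ (sv - ‖proj (Bseq n)‖) * (sv + ‖proj (Bseq n)‖) := h7
        _ ≤ (1/(n+1)) * (2*(Rb+1)) := by
            apply mul_le_mul h8.le h9 (by linarith) h5.le
        _ = 2*(Rb+1)/(n+1) := by ring
    have hdbl : 2*(2*(Rb+1)/(n+1 : ℝ)) = 4*(Rb+1)/(n+1 : ℝ) := by ring
    linarith
  -- Cauchy sequence
  set q : ℕ → X := fun n => proj (Bseq n) with hq
  have hcauchy : CauchySeq q := by
    rw [Metric.cauchySeq_iff]
    intro ε hε
    obtain ⟨N, hN⟩ := exists_nat_gt (4*(Rb+1)/(ε^2))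
    refine ⟨N, fun n hn k hk => ?_⟩
    wlog hnk : k ≤ n generalizing n k
    · rw [dist_comm]
      exact this k hk n hn (le_of_not_ge hnk)
    have h1 := hkey k (Bseq n) (hBgood n) (hBmono k n hnk)
    have hNpos : (0:ℝ) < N + 1 := by positivity
    have h2 : 4*(Rb+1)/(k+1 : ℝ) ≤ 4*(Rb+1)/(N+1 : ℝ) := by
      apply div_le_div_of_nonneg_left (by linarith) hNpos
      exact_mod_cast by omega
    have h3 : 4*(Rb+1)/(N+1 : ℝ) < ε^2 := by
      rw [div_lt_iff₀ hNpos]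
      have hεsq : (0:ℝ) < ε^2 := by positivity
      have h4 : 4*(Rb+1)/(ε^2) < N := hN
      rw [div_lt_iff₀ hεsq] at h4
      nlinarith
    rw [dist_eq_norm]
    have h5 : ‖q k - q n‖^2 < ε^2 := by
      have := hkey k (Bseq n) (hBgood n) (hBmono k n hnk)
      calc ‖q k - q n‖^2 ≤ 4*(Rb+1)/(k+1) := this
        _ ≤ 4*(Rb+1)/(N+1) := h2
        _ < ε^2 := h3
    have h6 : ‖q n - q k‖ = ‖q k - q n‖ := norm_sub_rev _ _
    rw [h6]
    exact lt_of_pow_lt_pow_left₀ 2 hε.le h5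
  obtain ⟨x0, hx0⟩ := cauchySeq_tendsto_of_complete hcauchy
  refine ⟨x0, fun p hp => ?_⟩
  -- augmented sequence converges to x0 and lies in C p
  set D : ℕ → Finset (X × X) := fun n => Bseq n ∪ {p} with hD
  have hDgood : ∀ n, D n ∈ good := by
    intro n
    constructor
    · rw [hD]
      simp only [Finset.coe_union, Finset.coe_singleton]
      apply Set.union_subset (hBgood n).1
      intro q hq
      simp only [Set.mem_singleton_iff] at hq
      rw [hq]; exact hp
    · exact Finset.mem_union_left _ (hBgood n).2
  have hBD : ∀ n, Bseq n ⊆ D n := fun n => Finset.subset_union_left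
  have hDC : ∀ n, proj (D n) ∈ C p := by
    intro n
    obtain ⟨hDK, _⟩ := hprojspec (D n) (hDgood n).1
    apply hKC (D n) p _ hDK
    exact Finset.mem_union_right _ (Finset.mem_singleton_self p)
  have hDtend : Tendsto (fun n => proj (D n)) atTop (𝓝 x0) := by
    rw [tendsto_iff_dist_tendsto_zero]
    have hb : ∀ n : ℕ, dist (proj (D n)) x0
        ≤ Real.sqrt (4*(Rb+1)/(n+1)) + dist (q n) x0 := by
      intro n
      have h1 := hkey n (D n) (hDgood n) (hBD n)
      have h2 : dist (proj (D n)) (q n) ≤ Real.sqrt (4*(Rb+1)/(n+1)) := by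
        rw [dist_eq_norm]
        have h3 : ‖proj (D n) - q n‖ = ‖q n - proj (D n)‖ := norm_sub_rev _ _
        rw [h3]
        exact Real.le_sqrt_of_sq_le h1
      calc dist (proj (D n)) x0
          ≤ dist (proj (D n)) (q n) + dist (q n) x0 := dist_triangle _ _ _
        _ ≤ Real.sqrt (4*(Rb+1)/(n+1)) + dist (q n) x0 := by linarith
    have hu : Tendsto (fun n : ℕ => Real.sqrt (4*(Rb+1)/(n+1)) + dist (q n) x0)
        atTop (𝓝 0) := by
      have hc : Tendsto (fun n : ℕ => 4*(Rb+1)/(n+1 : ℝ)) atTop (𝓝 0) := by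
        have h1 : (fun n : ℕ => 4*(Rb+1)/(n+1 : ℝ))
            = fun n : ℕ => (4*(Rb+1)) * (1/(n+1 : ℝ)) := by
          funext n; ring
        rw [h1]
        have h2 := tendsto_one_div_add_atTop_nhds_zero_nat (𝕜 := ℝ)
        have := h2.const_mul (4*(Rb+1))
        simpa using this
      have hsq : Tendsto (fun n : ℕ => Real.sqrt (4*(Rb+1)/(n+1))) atTop (𝓝 0) := by
        have := (Real.continuous_sqrt.tendsto 0).comp hc
        simp only [Real.sqrt_zero] at this
        exact this
      have hd : Tendsto (fun n : ℕ => dist (q n) x0) atTop (𝓝 0) :=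
        tendsto_iff_dist_tendsto_zero.mp hx0
      simpa using hsq.add hd
    exact squeeze_zero (fun n => dist_nonneg) hb hu
  exact hCclosed p |>.mem_of_tendsto hDtend (Filter.Eventually.of_forall hDC)


lemma strmaxmono_surj (σ : ℝ) (hσ : 0 < σ) (G : X → Set X) (hG : StrMaxMono σ G)
    (p0 : X × X) (hp0 : p0 ∈ gph G) (v0 : X) : ∃ x0 : X, v0 ∈ G x0 := by
  obtain ⟨x0, hx0⟩ := strmono_intersection σ hσ G hG.1 p0 hp0 v0
  set S : X → Set X := fun x => G x ∪ {v | x = x0 ∧ v = v0} with hSdef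
  have hgphS : ∀ p : X × X, p ∈ gph S ↔ p.2 ∈ G p.1 ∨ (p.1 = x0 ∧ p.2 = v0) := by
    intro p
    simp only [gph, hSdef, Set.mem_setOf_eq, Set.mem_union]
  have hq : ∀ p ∈ gph G, σ * ‖x0 - p.1‖^2 ≤ ⟪v0 - p.2, x0 - p.1⟫ := by
    intro p hp
    have := hx0 p hp
    simp only [qf] at this
    linarith
  have hSmono : StrMono σ S := by
    intro p hp q hq'
    rw [hgphS] at hp hq'
    rcases hp with hp | ⟨hp1, hp2⟩ <;> rcases hq' with hq' | ⟨hq1, hq2⟩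
    · exact hG.1 p hp q hq'
    · rw [hq1, hq2]
      have h1 := hq p hp
      have h2 : ⟪p.2 - v0, p.1 - x0⟫ = ⟪v0 - p.2, x0 - p.1⟫ := by
        rw [← neg_sub v0 p.2, ← neg_sub x0 p.1, inner_neg_neg]
      have h3 : ‖p.1 - x0‖ = ‖x0 - p.1‖ := norm_sub_rev _ _
      rw [h2, h3]
      exact h1
    · rw [hp1, hp2]
      exact hq q hq'
    · rw [hp1, hp2, hq1, hq2]
      simp
  have hsub : gph G ⊆ gph S := by
    intro p hp
    rw [hgphS]
    exact Or.inl hp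
  have heq := hG.2 S hSmono hsub
  have hmem : (x0, v0) ∈ gph S := by
    rw [hgphS]
    exact Or.inr ⟨rfl, rfl⟩
  rw [heq] at hmem
  exact ⟨x0, hmem⟩

end AuxMinty

/-- Local strong maximal monotonicity of type (B) with modulus σ yields a continuous
single-valued localization of `T⁻¹` around `(x̄*, x̄)` that is Lipschitz with constant `1/σ`. -/
theorem stmt_13 (σ : ℝ) (hσ : 0 < σ) (T : X → Set X) (xbar vbar : X)
    (hx : vbar ∈ T xbar) (hB : LocStrMaxBAt σ T xbar vbar) :
    ∃ W ∈ 𝓝 vbar, ∃ Q ∈ 𝓝 xbar, ∃ f : X → X,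
      ContinuousOn f W ∧ LipschitzOnWith (Real.toNNReal σ⁻¹) f W ∧
      (∀ y ∈ W, f y ∈ Q) ∧
      ∀ y x, (x ∈ invMap T y ∧ y ∈ W ∧ x ∈ Q) ↔ (y ∈ W ∧ x = f y) := by
  obtain ⟨U, hU, V, hV, G, hG, hagree⟩ := hB
  have hp0 : (xbar, vbar) ∈ gph G := by
    have h1 : ((xbar, vbar) : X × X) ∈ gph T ∩ U ×ˢ V :=
      ⟨hx, Set.mem_prod.mpr ⟨mem_of_mem_nhds hU, mem_of_mem_nhds hV⟩⟩
    rw [← hagree] at h1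
    exact h1.1
  -- inverse function
  have hsurj : ∀ v : X, ∃ x : X, v ∈ G x :=
    fun v => strmaxmono_surj σ hσ G hG (xbar, vbar) hp0 v
  choose g hg using hsurj
  have huniq : ∀ v x, v ∈ G x → x = g v := by
    intro v x hvx
    have h1 := hG.1 (x, v) hvx (g v, v) (hg v)
    simp only [sub_self, inner_zero_left] at h1
    have h2 : ‖x - g v‖^2 ≤ 0 := by
      by_contra h
      push_neg at h
      nlinarith
    have h3 : ‖x - g v‖ = 0 := by
      have := sq_nonneg ‖x - g v‖
      have h4 : ‖x - g v‖^2 = 0 := le_antisymm h2 this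
      exact pow_eq_zero_iff two_ne_zero |>.mp h4
    have := norm_sub_eq_zero_iff.mp h3
    exact this
  have hgbar : g vbar = xbar := (huniq vbar xbar hp0).symm
  have hlip : ∀ v w : X, ‖g v - g w‖ ≤ σ⁻¹ * ‖v - w‖ := by
    intro v w
    have h1 := hG.1 (g v, v) (hg v) (g w, w) (hg w)
    simp only at h1
    have h2 : ⟪v - w, g v - g w⟫ ≤ ‖v - w‖ * ‖g v - g w‖ := real_inner_le_norm _ _
    have h3 : (0:ℝ) ≤ ‖g v - g w‖ := norm_nonneg _
    have h4 : (0:ℝ) ≤ ‖v - w‖ := norm_nonneg _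
    rcases eq_or_lt_of_le h3 with h5 | h5
    · rw [← h5]
      positivity
    · rw [← mul_le_mul_iff_left₀ h5]
      have h6 : σ⁻¹ * ‖v - w‖ * ‖g v - g w‖ = σ⁻¹ * (‖v - w‖ * ‖g v - g w‖) := by ring
      rw [h6, ← mul_le_mul_iff_right₀ hσ]
      have h7 : σ * (σ⁻¹ * (‖v - w‖ * ‖g v - g w‖)) = (σ * σ⁻¹) * (‖v - w‖ * ‖g v - g w‖) := by
        ring
      rw [h7, mul_inv_cancel₀ hσ.ne', one_mul]
      calc σ * (‖g v - g w‖ * ‖g v - g w‖) = σ * ‖g v - g w‖^2 := by ring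
        _ ≤ ⟪v - w, g v - g w⟫ := h1
        _ ≤ ‖v - w‖ * ‖g v - g w‖ := h2
  -- neighborhoods
  obtain ⟨r1, hr1pos, hr1⟩ := Metric.mem_nhds_iff.mp hU
  obtain ⟨r2, hr2pos, hr2⟩ := Metric.mem_nhds_iff.mp hV
  set W : Set X := Metric.ball vbar (min r2 (σ * r1)) with hW
  set Q : Set X := Metric.ball xbar r1 with hQ
  have hWnhds : W ∈ 𝓝 vbar := Metric.ball_mem_nhds _ (lt_min hr2pos (by positivity))
  have hQnhds : Q ∈ 𝓝 xbar := Metric.ball_mem_nhds _ hr1pos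
  have hWV : W ⊆ V := fun y hy => hr2 (Metric.ball_subset_ball (min_le_left _ _) hy)
  have hQU : Q ⊆ U := hr1
  have hmaps : ∀ y ∈ W, g y ∈ Q := by
    intro y hy
    rw [hQ, Metric.mem_ball, dist_eq_norm]
    have h1 : ‖g y - xbar‖ = ‖g y - g vbar‖ := by rw [hgbar]
    rw [h1]
    have h2 := hlip y vbar
    have h3 : ‖y - vbar‖ < min r2 (σ * r1) := by
      rw [hW, Metric.mem_ball, dist_eq_norm] at hy
      exact hy
    have h4 : ‖y - vbar‖ < σ * r1 := lt_of_lt_of_le h3 (min_le_right _ _)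
    calc ‖g y - g vbar‖ ≤ σ⁻¹ * ‖y - vbar‖ := h2
      _ < σ⁻¹ * (σ * r1) := by
          apply mul_lt_mul_of_pos_left h4
          positivity
      _ = r1 := by field_simp
  have hlipOn : LipschitzOnWith (Real.toNNReal σ⁻¹) g W := by
    apply LipschitzOnWith.of_dist_le_mul
    intro a _ b _
    rw [dist_eq_norm, dist_eq_norm]
    have h1 : ((Real.toNNReal σ⁻¹ : NNReal) : ℝ) = σ⁻¹ := Real.coe_toNNReal _ (by positivity)
    rw [h1]
    exact hlip a b
  refine ⟨W, hWnhds, Q, hQnhds, g, hlipOn.continuousOn, hlipOn, hmaps, ?_⟩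
  intro y x
  constructor
  · rintro ⟨hxy, hyW, hxQ⟩
    refine ⟨hyW, ?_⟩
    have h1 : ((x, y) : X × X) ∈ gph T ∩ U ×ˢ V := by
      constructor
      · exact hxy
      · exact Set.mem_prod.mpr ⟨hQU hxQ, hWV hyW⟩
    rw [← hagree] at h1
    exact huniq y x h1.1
  · rintro ⟨hyW, rfl⟩
    have h1 : ((g y, y) : X × X) ∈ gph G ∩ U ×ˢ V := by
      constructor
      · exact hg y
      · exact Set.mem_prod.mpr ⟨hQU (hmaps y hyW), hWV hyW⟩
    rw [hagree] at h1
    exact ⟨h1.1, hyW, hmaps y hyW⟩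
end

section
/- Let X be a Hilbert space and T : X ⇉ X with (x̄, v̄) ∈ gph T and gph T locally closed around (x̄, v̄). Suppose T is locally hypomonotone around (x̄, v̄) with modulus r > 0. Then for every σ > r, the mapping (T + σI)⁻¹ has a localization R_σ around (v̄ + σx̄, x̄) that is single-valued on its domain; moreover, any two points (vᵢ, xᵢ) ∈ gph R_σ satisfy ‖v₁ − v₂‖ ≥ (σ − r)‖x₁ − x₂‖. -/
open Set Filter Topology RealInnerProductSpace

variable {X : Type*} [NormedAddCommGroup X] [InnerProductSpace ℝ X] [CompleteSpace X]

/-- The transvection `Δ_σ(x, v) = (v + σx, x)`. -/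
def transvect (σ : ℝ) : X × X → X × X := fun p => (p.2 + σ • p.1, p.1)

/-- The graph of the localization `R_σ` of `(T + σI)⁻¹`:
`gph R_σ = gph (T + σI)⁻¹ ∩ Δ_σ(W)`. -/
def RsigmaGph (σ : ℝ) (T : X → Set X) (W : Set (X × X)) : Set (X × X) :=
  gph (invMap (shiftI σ T)) ∩ transvect σ '' W

/-! Δ_σ is a homeomorphism carrying gph T onto gph (T + σI)⁻¹, so gph R_σ = Δ_σ(gph T ∩ W) and
Δ_σ(W) is a neighbourhood of Δ_σ(x̄, v̄). If (xᵢ, vᵢ) ∈ gph T ∩ W, hypomonotonicity gives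
(σ - r)‖x₁ - x₂‖² ≤ ⟪(v₁ + σx₁) - (v₂ + σx₂), x₁ - x₂⟫, and Cauchy–Schwarz yields the
estimate, which for σ > r forces single-valuedness. -/

omit [CompleteSpace X] in
theorem sub_mul_norm_le_norm_add_smul {r σ : ℝ} {x v : X} (h : -(r * ‖x‖ ^ 2) ≤ ⟪v, x⟫) :
    (σ - r) * ‖x‖ ≤ ‖v + σ • x‖ := by
  have key : (σ - r) * ‖x‖ * ‖x‖ ≤ ‖v + σ • x‖ * ‖x‖ :=
    calc (σ - r) * ‖x‖ * ‖x‖ ≤ ⟪v + σ • x, x⟫ := by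
          rw [inner_add_left, real_inner_smul_left, real_inner_self_eq_norm_sq]; linarith
      _ ≤ ‖v + σ • x‖ * ‖x‖ := real_inner_le_norm _ _
  rcases (norm_nonneg x).eq_or_lt with h0 | h0
  · simp [← h0]
  · exact le_of_mul_le_mul_right key h0

def transvectHomeomorph (σ : ℝ) : X × X ≃ₜ X × X where
  toFun := transvect σ
  invFun p := (p.2, p.1 - σ • p.2)
  left_inv p := by simp [transvect]
  right_inv p := by simp [transvect]
  continuous_toFun := by unfold transvect; fun_prop
  continuous_invFun := by fun_prop

omit [CompleteSpace X] in
theorem transvect_image_mem_nhds {σ : ℝ} {W : Set (X × X)} (hW : IsOpen W) {p : X × X}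
    (hp : p ∈ W) : transvect σ '' W ∈ 𝓝 (transvect σ p) :=
  ((transvectHomeomorph σ).isOpenMap W hW).mem_nhds (mem_image_of_mem _ hp)

omit [CompleteSpace X] in
theorem transvect_image_gph (σ : ℝ) (T : X → Set X) :
    transvect σ '' gph T = gph (invMap (shiftI σ T)) := by
  ext ⟨y, x⟩
  constructor
  · rintro ⟨⟨x', v⟩, hv, hxy⟩
    simp only [transvect, Prod.mk.injEq] at hxy
    obtain ⟨rfl, rfl⟩ := hxy
    exact ⟨v, hv, rfl⟩
  · rintro ⟨v, hv, hy⟩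
    refine ⟨(x, v), hv, ?_⟩
    simp only at hy
    simp [transvect, hy]

omit [CompleteSpace X] in
theorem RsigmaGph_eq_image (σ : ℝ) (T : X → Set X) (W : Set (X × X)) :
    RsigmaGph σ T W = transvect σ '' (gph T ∩ W) := by
  rw [RsigmaGph, ← transvect_image_gph]
  exact (image_inter (transvectHomeomorph σ).injective).symm

omit [CompleteSpace X] in
theorem HypoOn.sub_mul_norm_le_of_mem_RsigmaGph {r σ : ℝ} {T : X → Set X} {W : Set (X × X)}
    (hT : HypoOn r T W) {p q : X × X} (hp : p ∈ RsigmaGph σ T W) (hq : q ∈ RsigmaGph σ T W) :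
    (σ - r) * ‖p.2 - q.2‖ ≤ ‖p.1 - q.1‖ := by
  rw [RsigmaGph_eq_image] at hp hq
  obtain ⟨⟨x₁, v₁⟩, h₁, rfl⟩ := hp
  obtain ⟨⟨x₂, v₂⟩, h₂, rfl⟩ := hq
  have hsub : v₁ + σ • x₁ - (v₂ + σ • x₂) = (v₁ - v₂) + σ • (x₁ - x₂) := by
    rw [smul_sub]; abel
  simpa only [transvect, hsub] using sub_mul_norm_le_norm_add_smul (σ := σ) (hT _ h₁ _ h₂)

theorem stmt_16_general (T : X → Set X) (xbar vbar : X) (hx : vbar ∈ T xbar) (r : ℝ)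
    (W : Set (X × X)) (hWo : IsOpen W) (hWmem : (xbar, vbar) ∈ W)
    (hhypo : HypoOn r T W) (σ : ℝ) (hσ : r < σ) :
    (vbar + σ • xbar, xbar) ∈ RsigmaGph σ T W ∧
    transvect σ '' W ∈ 𝓝 ((vbar + σ • xbar, xbar) : X × X) ∧
    (∀ p ∈ RsigmaGph σ T W, ∀ q ∈ RsigmaGph σ T W, p.1 = q.1 → p.2 = q.2) ∧
    (∀ p ∈ RsigmaGph σ T W, ∀ q ∈ RsigmaGph σ T W,
      (σ - r) * ‖p.2 - q.2‖ ≤ ‖p.1 - q.1‖) := by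
  refine ⟨?_, transvect_image_mem_nhds hWo hWmem, fun p hp q hq hpq => ?_,
    fun p hp q hq => hhypo.sub_mul_norm_le_of_mem_RsigmaGph hp hq⟩
  · rw [RsigmaGph_eq_image]
    exact mem_image_of_mem (transvect σ) (show (xbar, vbar) ∈ gph T ∩ W from ⟨hx, hWmem⟩)
  · have h := hhypo.sub_mul_norm_le_of_mem_RsigmaGph hp hq
    rw [hpq, sub_self, norm_zero, ← mul_zero (σ - r)] at h
    exact sub_eq_zero.mp (norm_le_zero_iff.mp (le_of_mul_le_mul_left h (sub_pos.mpr hσ)))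

/-- Under local hypomonotonicity with modulus `r`, for every `σ > r` the mapping
`(T + σI)⁻¹` has a localization around `(v̄ + σx̄, x̄)` that is single-valued on its
domain and satisfies `‖v₁ − v₂‖ ≥ (σ − r)‖x₁ − x₂‖` on its graph. -/
theorem stmt_16 (T : X → Set X) (xbar vbar : X) (hx : vbar ∈ T xbar)
    (hcl : LocClosedAt (gph T) (xbar, vbar)) (r : ℝ) (hr : 0 < r)
    (W : Set (X × X)) (hWo : IsOpen W) (hWmem : (xbar, vbar) ∈ W)
    (hhypo : HypoOn r T W) (σ : ℝ) (hσ : r < σ) :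
    (vbar + σ • xbar, xbar) ∈ RsigmaGph σ T W ∧
    transvect σ '' W ∈ 𝓝 ((vbar + σ • xbar, xbar) : X × X) ∧
    (∀ p ∈ RsigmaGph σ T W, ∀ q ∈ RsigmaGph σ T W, p.1 = q.1 → p.2 = q.2) ∧
    (∀ p ∈ RsigmaGph σ T W, ∀ q ∈ RsigmaGph σ T W,
      (σ - r) * ‖p.2 - q.2‖ ≤ ‖p.1 - q.1‖) :=
  stmt_16_general T xbar vbar hx r W hWo hWmem hhypo σ hσ
end
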